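/- arXiv:1409.3769 — 10 statements merged into one kernel-verified Lean document; each statement's English description precedes it below -/
import Mathlib

section
/- Let L ⊆ A be a bracket-closed subspace and let u ∈ L be a homogeneous element such that the order of p_{uu} in Fˣ is greater than 2 (equivalently p_{uu}² ≠ 1). Then u^m ∈ L for every m ∈ ℕ. -/
/-- An `F`-subspace `L` of a `G`-graded algebra `A` is *bracket-closed* (w.r.t. the
bicharacter `χ`) if it is spanned by its homogeneous elements and is closed under the
braided bracket `[u,v] = vu − p_{vu}·uv` of homogeneous elements, where
`p_{uv} = χ (deg u) (deg v)`. -/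
def IsBracketClosed {F A : Type*} (G : Type*) [Field F] [AddCommGroup G]
    [Ring A] [Algebra F A]
    (𝒜 : G → Submodule F A) (χ : G → G → Fˣ) (L : Submodule F A) : Prop :=
  L = Submodule.span F {a : A | a ∈ L ∧ ∃ g : G, a ∈ 𝒜 g} ∧
    ∀ (g h : G), ∀ u ∈ 𝒜 g, ∀ v ∈ 𝒜 h,
      u ∈ L → v ∈ L → v * u - (χ h g : F) • (u * v) ∈ L

theorem stmt_2 (F : Type*) [Field F] [CharZero F]
    (G : Type*) [AddCommGroup G] [DecidableEq G]
    (A : Type*) [Ring A] [Algebra F A]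
    (𝒜 : G → Submodule F A) [GradedAlgebra 𝒜]
    (χ : G → G → Fˣ)
    (hχ1 : ∀ g h k : G, χ (g + h) k = χ g k * χ h k)
    (hχ2 : ∀ g h k : G, χ g (h + k) = χ g h * χ g k)
    (L : Submodule F A) (hL : IsBracketClosed G 𝒜 χ L)
    (g : G) (u : A) (hu : u ∈ 𝒜 g) (huL : u ∈ L)
    (hord : ((χ g g : F)) ^ 2 ≠ 1) :
    ∀ m : ℕ, 0 < m → u ^ m ∈ L := by
  set q : F := (χ g g : F) with hq
  -- χ 0 h = 1 and χ h 0 = 1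
  have hzero1 : ∀ h : G, χ 0 h = 1 := by
    intro h
    have := hχ1 0 0 h
    rw [add_zero] at this
    exact (mul_left_cancel (a := χ 0 h) (by rw [mul_one, ← this])).symm
  have hzero2 : ∀ h : G, χ h 0 = 1 := by
    intro h
    have := hχ2 h 0 0
    rw [add_zero] at this
    exact (mul_left_cancel (a := χ h 0) (by rw [mul_one, ← this])).symm
  -- χ (n • g) (k • g) = χ g g ^ (n * k)
  have hpow1 : ∀ (n : ℕ) (h : G), χ (n • g) h = χ g h ^ n := by
    intro n h
    induction n with
    | zero => simpa using hzero1 h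
    | succ n ih => rw [succ_nsmul, hχ1, ih, pow_succ]
  have hpow2 : ∀ k : ℕ, χ g (k • g) = χ g g ^ k := by
    intro k
    induction k with
    | zero => simpa using hzero2 g
    | succ k ih => rw [succ_nsmul, hχ2, ih, pow_succ]
  have hpow : ∀ n k : ℕ, χ ((n : ℕ) • g) (k • g) = χ g g ^ (n * k) := by
    intro n k
    rw [hpow1, hpow2, ← pow_mul, mul_comm]
  -- the key bracket computation
  have key : ∀ k j : ℕ, u ^ k ∈ L → u ^ j ∈ L →
      ((1 : F) - q ^ (j * k)) • u ^ (k + j) ∈ L := by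
    intro k j hk hj
    have h1 := hL.2 (k • g) (j • g) (u ^ k) (SetLike.pow_mem_graded k hu)
      (u ^ j) (SetLike.pow_mem_graded j hu) hk hj
    have h2 : ((χ (j • g) (k • g) : F)) = q ^ (j * k) := by
      rw [hpow j k]; push_cast; rfl
    rw [h2] at h1
    have h3 : u ^ j * u ^ k = u ^ (k + j) := by rw [← pow_add, add_comm]
    have h4 : u ^ k * u ^ j = u ^ (k + j) := by rw [← pow_add]
    rw [h3, h4] at h1
    rwa [sub_smul, one_smul]
  -- main strong induction
  intro m
  induction m using Nat.strong_induction_on with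
  | _ m ih =>
    intro hm
    rcases m with _ | m
    · omega
    rcases m with _ | n
    · simpa using huL
    · have hq1 : q ≠ 1 := by
        intro h; exact hord (by rw [h, one_pow])
      by_cases hcase : q ^ (n + 1) = 1
      · -- then n + 2 ≥ 3 since q ≠ 1 forbids n = 0
        rcases n with _ | n
        · exact absurd (by simpa using hcase) hq1
        · -- use k = n + 1, j = 2 : exponent 2 * (n + 1), power u ^ (n + 3)
          have hk : u ^ (n + 1) ∈ L := ih (n + 1) (by omega) (by omega)
          have hj : u ^ 2 ∈ L := ih 2 (by omega) (by omega)
          have h5 := key (n + 1) 2 hk hj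
          have hne : (1 : F) - q ^ (2 * (n + 1)) ≠ 0 := by
            intro h
            have h6 : q ^ (2 * (n + 1)) = 1 := by linear_combination -h
            apply hord
            have : q ^ (2 * (n + 1)) * q ^ 2 = (q ^ (n + 2)) ^ 2 := by ring
            rw [h6, one_mul] at this
            rw [this, hcase, one_pow]
          have := L.smul_mem ((1 - q ^ (2 * (n + 1)))⁻¹) h5
          rwa [smul_smul, inv_mul_cancel₀ hne, one_smul] at this
      · -- use k = n + 1, j = 1
        have hk : u ^ (n + 1) ∈ L := ih (n + 1) (by omega) (by omega)
        have h5 := key (n + 1) 1 hk (by simpa using huL)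
        rw [one_mul] at h5
        have hne : (1 : F) - q ^ (n + 1) ≠ 0 := by
          intro h
          exact hcase (by linear_combination -h)
        have := L.smul_mem ((1 - q ^ (n + 1))⁻¹) h5
        rwa [smul_smul, inv_mul_cancel₀ hne, one_smul] at this
end

section
/- Let L ⊆ A be a bracket-closed subspace and let u, v, w ∈ L be homogeneous. Set a := 1 − p̃_{vw}, b := 1 − p̃_{uw}, c := 1 − p̃_{vu}, d := 1 − p̃_{vu}·p̃_{uw}, e := 1 − p̃_{vu}·p̃_{vw}, f := 1 − p̃_{vw}·p̃_{uw}. If one of the following holds: (i) a ≠ 0 and b ≠ 0; (ii) a ≠ 0 and c ≠ 0; (iii) a ≠ 0 and d ≠ 0; (iv) b ≠ 0 and c ≠ 0; (v) b ≠ 0 and e ≠ 0; (vi) c ≠ 0 and f ≠ 0; then all six products uvw, uwv, vwu, vuw, wuv, wvu belong to L. -/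
private lemma smul_cancel_mem {F A : Type*} [Field F] [Ring A] [Algebra F A]
    {L : Submodule F A} {c : F} (hc : c ≠ 0) {m : A} (h : c • m ∈ L) : m ∈ L := by
  have := L.smul_mem c⁻¹ h
  rwa [smul_smul, inv_mul_cancel₀ hc, one_smul] at this

private lemma shift_mem {F A : Type*} [Field F] [Ring A] [Algebra F A]
    {L : Submodule F A} {c : F} {m n : A} (h : m - c • n ∈ L) (hn : n ∈ L) : m ∈ L := by
  have := L.add_mem h (L.smul_mem c hn)
  simpa using this

private lemma chain3 {F A : Type*} [Field F] [Ring A] [Algebra F A] {L : Submodule F A}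
    {m1 m4 m5 : A} {c1 c4 c5 : F}
    (h1 : m1 - c1 • m4 ∈ L) (h4 : m4 - c4 • m5 ∈ L) (h5 : m5 - c5 • m1 ∈ L)
    (hne : (1:F) - c1 * c4 * c5 ≠ 0) : m1 ∈ L ∧ m4 ∈ L ∧ m5 ∈ L := by
  have key : ((1:F) - c1*c4*c5) • m1
      = ((m1 - c1 • m4) + c1 • (m4 - c4 • m5)) + (c1*c4) • (m5 - c5 • m1) := by module
  have hm1 : m1 ∈ L := smul_cancel_mem hne
    (by rw [key]; exact L.add_mem (L.add_mem h1 (L.smul_mem _ h4)) (L.smul_mem _ h5))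
  have hm5 : m5 ∈ L := shift_mem h5 hm1
  have hm4 : m4 ∈ L := shift_mem h4 hm5
  exact ⟨hm1, hm4, hm5⟩

private lemma pair_mem {F G A : Type*} [Field F] [AddCommGroup G] [Ring A] [Algebra F A]
    {𝒜 : G → Submodule F A} {χ : G → G → Fˣ} {L : Submodule F A}
    (hL : IsBracketClosed G 𝒜 χ L) {s t : G} {x y : A}
    (hx : x ∈ 𝒜 s) (hy : y ∈ 𝒜 t) (hxL : x ∈ L) (hyL : y ∈ L)
    (hne : (1:F) - (χ s t : F) * (χ t s : F) ≠ 0) : x * y ∈ L := by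
  have h1 := hL.2 s t x hx y hy hxL hyL
  have h2 := hL.2 t s y hy x hx hyL hxL
  have key : ((1:F) - (χ s t : F) * (χ t s : F)) • (x * y)
      = (x*y - (χ s t : F) • (y*x)) + (χ s t : F) • (y*x - (χ t s : F) • (x*y)) := by
    module
  exact smul_cancel_mem hne (by rw [key]; exact L.add_mem h2 (L.smul_mem _ h1))

private lemma main_aux (F : Type*) [Field F] [CharZero F]
    (G : Type*) [AddCommGroup G] [DecidableEq G]
    (A : Type*) [Ring A] [Algebra F A]
    (𝒜 : G → Submodule F A) [GradedAlgebra 𝒜]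
    (χ : G → G → Fˣ)
    (hχ1 : ∀ g h k : G, χ (g + h) k = χ g k * χ h k)
    (hχ2 : ∀ g h k : G, χ g (h + k) = χ g h * χ g k)
    (L : Submodule F A) (hL : IsBracketClosed G 𝒜 χ L)
    (g h k : G) (u v w : A)
    (hu : u ∈ 𝒜 g) (hv : v ∈ 𝒜 h) (hw : w ∈ 𝒜 k)
    (huL : u ∈ L) (hvL : v ∈ L) (hwL : w ∈ L)
    (ha : (1:F) - (χ h k : F) * (χ k h : F) ≠ 0)
    (hb : (1:F) - (χ g k : F) * (χ k g : F) ≠ 0) :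
    u * v * w ∈ L ∧ u * w * v ∈ L ∧ v * w * u ∈ L ∧
      v * u * w ∈ L ∧ w * u * v ∈ L ∧ w * v * u ∈ L := by
  have hvw : v * w ∈ 𝒜 (h + k) := SetLike.mul_mem_graded hv hw
  have hwv : w * v ∈ 𝒜 (k + h) := SetLike.mul_mem_graded hw hv
  have huw : u * w ∈ 𝒜 (g + k) := SetLike.mul_mem_graded hu hw
  have hwu : w * u ∈ 𝒜 (k + g) := SetLike.mul_mem_graded hw hu
  have huv : u * v ∈ 𝒜 (g + h) := SetLike.mul_mem_graded hu hv
  have hvu : v * u ∈ 𝒜 (h + g) := SetLike.mul_mem_graded hv hu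
  have e_g_hk : ((χ g (h+k) : Fˣ) : F) = (χ g h : F) * (χ g k : F) := by
    rw [hχ2, Units.val_mul]
  have e_hk_g : ((χ (h+k) g : Fˣ) : F) = (χ h g : F) * (χ k g : F) := by
    rw [hχ1, Units.val_mul]
  have e_g_kh : ((χ g (k+h) : Fˣ) : F) = (χ g k : F) * (χ g h : F) := by
    rw [hχ2, Units.val_mul]
  have e_kh_g : ((χ (k+h) g : Fˣ) : F) = (χ k g : F) * (χ h g : F) := by
    rw [hχ1, Units.val_mul]
  have e_h_gk : ((χ h (g+k) : Fˣ) : F) = (χ h g : F) * (χ h k : F) := by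
    rw [hχ2, Units.val_mul]
  have e_gk_h : ((χ (g+k) h : Fˣ) : F) = (χ g h : F) * (χ k h : F) := by
    rw [hχ1, Units.val_mul]
  have e_h_kg : ((χ h (k+g) : Fˣ) : F) = (χ h k : F) * (χ h g : F) := by
    rw [hχ2, Units.val_mul]
  have e_kg_h : ((χ (k+g) h : Fˣ) : F) = (χ k h : F) * (χ g h : F) := by
    rw [hχ1, Units.val_mul]
  have e_k_gh : ((χ k (g+h) : Fˣ) : F) = (χ k g : F) * (χ k h : F) := by
    rw [hχ2, Units.val_mul]
  have e_gh_k : ((χ (g+h) k : Fˣ) : F) = (χ g k : F) * (χ h k : F) := by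
    rw [hχ1, Units.val_mul]
  have e_k_hg : ((χ k (h+g) : Fˣ) : F) = (χ k h : F) * (χ k g : F) := by
    rw [hχ2, Units.val_mul]
  have e_hg_k : ((χ (h+g) k : Fˣ) : F) = (χ h k : F) * (χ g k : F) := by
    rw [hχ1, Units.val_mul]
  have ha' : (1:F) - (χ k h : F) * (χ h k : F) ≠ 0 := by rw [mul_comm]; exact ha
  have hb' : (1:F) - (χ k g : F) * (χ g k : F) ≠ 0 := by rw [mul_comm]; exact hb
  have hvwL : v * w ∈ L := pair_mem hL hv hw hvL hwL ha
  have hwvL : w * v ∈ L := pair_mem hL hw hv hwL hvL ha'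
  have huwL : u * w ∈ L := pair_mem hL hu hw huL hwL hb
  have hwuL : w * u ∈ L := pair_mem hL hw hu hwL huL hb'
  by_cases hc : (1:F) - (χ g h : F) * (χ h g : F) = 0
  · -- p̃_{uv} = 1 : use pairs (u, vw), (u, wv), (v, uw), (v, wu)
    have A1 : u * (v * w) ∈ L := pair_mem hL hu hvw huL hvwL (by
      rw [e_g_hk, e_hk_g]
      intro hq
      exact hb (by linear_combination hq - ((χ g k : F) * (χ k g : F)) * hc))
    have A4 : (v * w) * u ∈ L := pair_mem hL hvw hu hvwL huL (by
      rw [e_hk_g, e_g_hk]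
      intro hq
      exact hb (by linear_combination hq - ((χ g k : F) * (χ k g : F)) * hc))
    have A2 : u * (w * v) ∈ L := pair_mem hL hu hwv huL hwvL (by
      rw [e_g_kh, e_kh_g]
      intro hq
      exact hb (by linear_combination hq - ((χ g k : F) * (χ k g : F)) * hc))
    have A6 : (w * v) * u ∈ L := pair_mem hL hwv hu hwvL huL (by
      rw [e_kh_g, e_g_kh]
      intro hq
      exact hb (by linear_combination hq - ((χ g k : F) * (χ k g : F)) * hc))
    have A3 : v * (u * w) ∈ L := pair_mem hL hv huw hvL huwL (by
      rw [e_h_gk, e_gk_h]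
      intro hq
      exact ha (by linear_combination hq - ((χ h k : F) * (χ k h : F)) * hc))
    have A5 : (w * u) * v ∈ L := pair_mem hL hwu hv hwuL hvL (by
      rw [e_kg_h, e_h_kg]
      intro hq
      exact ha (by linear_combination hq - ((χ h k : F) * (χ k h : F)) * hc))
    refine ⟨?_, ?_, A4, ?_, A5, A6⟩
    · rw [mul_assoc]; exact A1
    · rw [mul_assoc]; exact A2
    · rw [mul_assoc]; exact A3
  · -- p̃_{uv} ≠ 1 : uv, vu ∈ L as well
    have hc' : (1:F) - (χ h g : F) * (χ g h : F) ≠ 0 := by rw [mul_comm]; exact hc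
    have huvL : u * v ∈ L := pair_mem hL hu hv huL hvL hc
    have hvuL : v * u ∈ L := pair_mem hL hv hu hvL huL hc'
    by_cases hd : (1:F) - ((χ g h : F) * (χ g k : F)) * ((χ h g : F) * (χ k g : F)) = 0
    · -- d = 0 : chain argument, with 1 - P = a ≠ 0
      have R1 := hL.2 (h+k) g (v*w) hvw u hu hvwL huL
      rw [e_g_hk, ← mul_assoc] at R1
      have R4 := hL.2 (k+g) h (w*u) hwu v hv hwuL hvL
      rw [e_h_kg, ← mul_assoc] at R4
      have R5 := hL.2 (g+h) k (u*v) huv w hw huvL hwL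
      rw [e_k_gh, ← mul_assoc] at R5
      have hne1 : (1:F) - ((χ g h : F) * (χ g k : F)) *
          ((χ h k : F) * (χ h g : F)) * ((χ k g : F) * (χ k h : F)) ≠ 0 := by
        intro hq
        exact ha (by linear_combination hq - ((χ h k : F) * (χ k h : F)) * hd)
      obtain ⟨hm1, hm4, hm5⟩ := chain3 R1 R4 R5 hne1
      have R2 := hL.2 (k+h) g (w*v) hwv u hu hwvL huL
      rw [e_g_kh, ← mul_assoc] at R2
      have R6 := hL.2 (h+g) k (v*u) hvu w hw hvuL hwL
      rw [e_k_hg, ← mul_assoc] at R6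
      have R3 := hL.2 (g+k) h (u*w) huw v hv huwL hvL
      rw [e_h_gk, ← mul_assoc] at R3
      have hne2 : (1:F) - ((χ g k : F) * (χ g h : F)) *
          ((χ k h : F) * (χ k g : F)) * ((χ h g : F) * (χ h k : F)) ≠ 0 := by
        intro hq
        exact ha (by linear_combination hq - ((χ h k : F) * (χ k h : F)) * hd)
      obtain ⟨hm2, hm6, hm3⟩ := chain3 R2 R6 R3 hne2
      exact ⟨hm1, hm2, hm4, hm3, hm5, hm6⟩
    · -- d ≠ 0 : pairs (u, vw), (u, wv) give four monomials; brackets give the rest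
      have A1 : u * (v * w) ∈ L := pair_mem hL hu hvw huL hvwL (by
        rw [e_g_hk, e_hk_g]
        intro hq
        exact hd (by linear_combination hq))
      have A4 : (v * w) * u ∈ L := pair_mem hL hvw hu hvwL huL (by
        rw [e_hk_g, e_g_hk]
        intro hq
        exact hd (by linear_combination hq))
      have A2 : u * (w * v) ∈ L := pair_mem hL hu hwv huL hwvL (by
        rw [e_g_kh, e_kh_g]
        intro hq
        exact hd (by linear_combination hq))
      have A6 : (w * v) * u ∈ L := pair_mem hL hwv hu hwvL huL (by
        rw [e_kh_g, e_g_kh]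
        intro hq
        exact hd (by linear_combination hq))
      rw [← mul_assoc] at A1 A2
      have R3 := hL.2 (g+k) h (u*w) huw v hv huwL hvL
      rw [e_h_gk, ← mul_assoc] at R3
      have hm3 : v * u * w ∈ L := shift_mem R3 A2
      have R5 := hL.2 (g+h) k (u*v) huv w hw huvL hwL
      rw [e_k_gh, ← mul_assoc] at R5
      have hm5 : w * u * v ∈ L := shift_mem R5 A1
      exact ⟨A1, A2, A4, hm3, hm5, A6⟩

theorem stmt_4 (F : Type*) [Field F] [CharZero F]
    (G : Type*) [AddCommGroup G] [DecidableEq G]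
    (A : Type*) [Ring A] [Algebra F A]
    (𝒜 : G → Submodule F A) [GradedAlgebra 𝒜]
    (χ : G → G → Fˣ)
    (hχ1 : ∀ g h k : G, χ (g + h) k = χ g k * χ h k)
    (hχ2 : ∀ g h k : G, χ g (h + k) = χ g h * χ g k)
    (L : Submodule F A) (hL : IsBracketClosed G 𝒜 χ L)
    (g h k : G) (u v w : A)
    (hu : u ∈ 𝒜 g) (hv : v ∈ 𝒜 h) (hw : w ∈ 𝒜 k)
    (huL : u ∈ L) (hvL : v ∈ L) (hwL : w ∈ L)
    (hcond :
      (1 - (χ h k : F) * (χ k h : F) ≠ 0 ∧ 1 - (χ g k : F) * (χ k g : F) ≠ 0) ∨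
      (1 - (χ h k : F) * (χ k h : F) ≠ 0 ∧ 1 - (χ h g : F) * (χ g h : F) ≠ 0) ∨
      (1 - (χ h k : F) * (χ k h : F) ≠ 0 ∧
        1 - ((χ h g : F) * (χ g h : F)) * ((χ g k : F) * (χ k g : F)) ≠ 0) ∨
      (1 - (χ g k : F) * (χ k g : F) ≠ 0 ∧ 1 - (χ h g : F) * (χ g h : F) ≠ 0) ∨
      (1 - (χ g k : F) * (χ k g : F) ≠ 0 ∧
        1 - ((χ h g : F) * (χ g h : F)) * ((χ h k : F) * (χ k h : F)) ≠ 0) ∨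
      (1 - (χ h g : F) * (χ g h : F) ≠ 0 ∧
        1 - ((χ h k : F) * (χ k h : F)) * ((χ g k : F) * (χ k g : F)) ≠ 0)) :
    u * v * w ∈ L ∧ u * w * v ∈ L ∧ v * w * u ∈ L ∧
      v * u * w ∈ L ∧ w * u * v ∈ L ∧ w * v * u ∈ L := by
  have case_ab : (1:F) - (χ h k : F) * (χ k h : F) ≠ 0 →
      (1:F) - (χ g k : F) * (χ k g : F) ≠ 0 →
      u * v * w ∈ L ∧ u * w * v ∈ L ∧ v * w * u ∈ L ∧
        v * u * w ∈ L ∧ w * u * v ∈ L ∧ w * v * u ∈ L := fun ha hb =>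
    main_aux F G A 𝒜 χ hχ1 hχ2 L hL g h k u v w hu hv hw huL hvL hwL ha hb
  have case_ac : (1:F) - (χ h k : F) * (χ k h : F) ≠ 0 →
      (1:F) - (χ h g : F) * (χ g h : F) ≠ 0 →
      u * v * w ∈ L ∧ u * w * v ∈ L ∧ v * w * u ∈ L ∧
        v * u * w ∈ L ∧ w * u * v ∈ L ∧ w * v * u ∈ L := by
    intro ha hc
    obtain ⟨B1, B2, B3, B4, B5, B6⟩ :=
      main_aux F G A 𝒜 χ hχ1 hχ2 L hL g k h u w v hu hw hv huL hwL hvL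
        (by rw [mul_comm]; exact ha) (by rw [mul_comm]; exact hc)
    exact ⟨B2, B1, B6, B5, B4, B3⟩
  have case_bc : (1:F) - (χ g k : F) * (χ k g : F) ≠ 0 →
      (1:F) - (χ h g : F) * (χ g h : F) ≠ 0 →
      u * v * w ∈ L ∧ u * w * v ∈ L ∧ v * w * u ∈ L ∧
        v * u * w ∈ L ∧ w * u * v ∈ L ∧ w * v * u ∈ L := by
    intro hb hc
    obtain ⟨C1, C2, C3, C4, C5, C6⟩ :=
      main_aux F G A 𝒜 χ hχ1 hχ2 L hL h k g v w u hv hw hu hvL hwL huL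
        (by rw [mul_comm]; exact hb) hc
    exact ⟨C5, C6, C1, C2, C3, C4⟩
  rcases hcond with ⟨ha, hb⟩ | ⟨ha, hc⟩ | ⟨ha, hd⟩ | ⟨hb, hc⟩ | ⟨hb, he⟩ | ⟨hc, hf⟩
  · exact case_ab ha hb
  · exact case_ac ha hc
  · by_cases hb : (1:F) - (χ g k : F) * (χ k g : F) = 0
    · refine case_ac ha fun hq => hd ?_
      linear_combination hq + ((χ h g : F) * (χ g h : F)) * hb
    · exact case_ab ha hb
  · exact case_bc hb hc
  · by_cases ha : (1:F) - (χ h k : F) * (χ k h : F) = 0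
    · refine case_bc hb fun hq => he ?_
      linear_combination hq + ((χ h g : F) * (χ g h : F)) * ha
    · exact case_ab ha hb
  · by_cases ha : (1:F) - (χ h k : F) * (χ k h : F) = 0
    · refine case_bc ?_ hc
      intro hq
      exact hf (by linear_combination ha + ((χ h k : F) * (χ k h : F)) * hq)
    · exact case_ac ha hc
end

section
/- Let L ⊆ A be a bracket-closed subspace and let u, v ∈ L be homogeneous with p_{uv}p_{vu} ≠ 1 and p_{uu}² = 1. Then for every m ∈ ℕ all the elements u^m v, u^{m−1}vu, …, vu^m (that is, u^k v u^{m−k} for 0 ≤ k ≤ m) belong to L. -/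
theorem stmt_6' (F : Type*) [Field F] [CharZero F]
    (G : Type*) [AddCommGroup G] [DecidableEq G]
    (A : Type*) [Ring A] [Algebra F A]
    (𝒜 : G → Submodule F A) [GradedAlgebra 𝒜]
    (χ : G → G → Fˣ)
    (hχ1 : ∀ g h k : G, χ (g + h) k = χ g k * χ h k)
    (hχ2 : ∀ g h k : G, χ g (h + k) = χ g h * χ g k)
    (L : Submodule F A)
    (hbr : ∀ (g h : G), ∀ u ∈ 𝒜 g, ∀ v ∈ 𝒜 h,
      u ∈ L → v ∈ L → v * u - (χ h g : F) • (u * v) ∈ L)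
    (g h : G) (u v : A) (hu : u ∈ 𝒜 g) (hv : v ∈ 𝒜 h)
    (huL : u ∈ L) (hvL : v ∈ L)
    (hp : (χ g h : F) * (χ h g : F) ≠ 1)
    (hq : ((χ g g : F)) ^ 2 = 1) :
    ∀ m : ℕ, ∀ k : ℕ, k ≤ m → u ^ k * v * u ^ (m - k) ∈ L := by
  -- χ vanishes at 0
  have hzero1 : ∀ c : G, χ 0 c = 1 := by
    intro c
    have h0 := hχ1 0 0 c
    rw [add_zero] at h0
    have : χ 0 c * 1 = χ 0 c * χ 0 c := by rw [mul_one]; exact h0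
    exact (mul_left_cancel this).symm
  have hzero2 : ∀ c : G, χ c 0 = 1 := by
    intro c
    have h0 := hχ2 c 0 0
    rw [add_zero] at h0
    have : χ c 0 * 1 = χ c 0 * χ c 0 := by rw [mul_one]; exact h0
    exact (mul_left_cancel this).symm
  have hpow1 : ∀ (c : G) (n : ℕ), χ (n • g) c = (χ g c) ^ n := by
    intro c n
    induction n with
    | zero => simpa using hzero1 c
    | succ n ih => rw [succ_nsmul, hχ1, ih, pow_succ]
  have hpow2 : ∀ (c : G) (n : ℕ), χ c (n • g) = (χ c g) ^ n := by
    intro c n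
    induction n with
    | zero => simpa using hzero2 c
    | succ n ih => rw [succ_nsmul, hχ2, ih, pow_succ]
  have hw : ∀ k j : ℕ, u ^ k * v * u ^ j ∈ 𝒜 (k • g + h + j • g) := fun k j =>
    SetLike.mul_mem_graded
      (SetLike.mul_mem_graded (SetLike.pow_mem_graded k hu) hv)
      (SetLike.pow_mem_graded j hu)
  have hne : (1 : F) - (χ g h : F) * (χ h g : F) ≠ 0 := sub_ne_zero.mpr (Ne.symm hp)
  intro m
  induction m with
  | zero =>
      intro k hk
      interval_cases k
      simpa using hvL
  | succ m ih =>
      -- the key combination for k ≤ m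
      have hX : ∀ k : ℕ, k ≤ m → u ^ k * v * u ^ (m + 1 - k) ∈ L := by
        intro k hk
        set dk := k • g + h + (m - k) • g with hdk
        have hwk : u ^ k * v * u ^ (m - k) ∈ 𝒜 dk := hw k (m - k)
        have hwkL : u ^ k * v * u ^ (m - k) ∈ L := ih k hk
        have ha := hbr g dk u hu _ hwk huL hwkL
        have hb := hbr dk g _ hwk u hu hwkL huL
        have e1 : (u ^ k * v * u ^ (m - k)) * u = u ^ k * v * u ^ (m + 1 - k) := by
          have : m - k + 1 = m + 1 - k := by omega
          rw [mul_assoc, ← pow_succ, this]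
        have e2 : u * (u ^ k * v * u ^ (m - k)) = u ^ (k + 1) * v * u ^ (m - k) := by
          simp [pow_succ', mul_assoc]
        rw [e1, e2] at ha hb
        have hαβ : (χ dk g : F) * (χ g dk : F) = (χ g h : F) * (χ h g : F) := by
          have e : (χ dk g : F) * (χ g dk : F) =
              ((χ g h : F) * (χ h g : F)) *
                (((χ g g : F) ^ 2) ^ k * ((χ g g : F) ^ 2) ^ (m - k)) := by
            rw [hdk]
            push_cast [hχ1, hχ2, hpow1, hpow2]
            ring
          rw [e, hq]
          simp
        have hid : (u ^ k * v * u ^ (m + 1 - k) - (χ dk g : F) • (u ^ (k + 1) * v * u ^ (m - k)))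
            + (χ dk g : F) • (u ^ (k + 1) * v * u ^ (m - k) - (χ g dk : F) • (u ^ k * v * u ^ (m + 1 - k)))
            = ((1 : F) - (χ dk g : F) * (χ g dk : F)) • (u ^ k * v * u ^ (m + 1 - k)) := by
          module
        rw [hαβ] at hid
        have hmem : ((1 : F) - (χ g h : F) * (χ h g : F)) • (u ^ k * v * u ^ (m + 1 - k)) ∈ L := by
          rw [← hid]
          exact L.add_mem ha (L.smul_mem _ hb)
        have := L.smul_mem (((1 : F) - (χ g h : F) * (χ h g : F))⁻¹) hmem
        rwa [smul_smul, inv_mul_cancel₀ hne, one_smul] at this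
      intro k hk
      rcases Nat.lt_or_ge k (m + 1) with hk' | hk'
      · exact hX k (by omega)
      · -- k = m + 1
        have hkeq : k = m + 1 := by omega
        subst hkeq
        set dm := m • g + h + (0 : ℕ) • g with hdm
        have hwm : u ^ m * v * u ^ (0 : ℕ) ∈ 𝒜 dm := hw m 0
        have hwmL : u ^ m * v * u ^ (0 : ℕ) ∈ L := by
          have := ih m le_rfl
          simpa using this
        have hb := hbr dm g _ hwm u hu hwmL huL
        have e2 : u * (u ^ m * v * u ^ (0 : ℕ)) = u ^ (m + 1) * v * u ^ (m + 1 - (m + 1)) := by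
          simp [pow_succ', mul_assoc]
        have e1 : (u ^ m * v * u ^ (0 : ℕ)) * u = u ^ m * v * u ^ (1 : ℕ) := by
          simp [mul_assoc]
        rw [e1, e2] at hb
        have hmem1 : u ^ m * v * u ^ (1 : ℕ) ∈ L := by
          have := hX m le_rfl
          simpa using this
        have := L.add_mem hb (L.smul_mem ((χ g dm : F)) hmem1)
        simpa using this

theorem stmt_6 (F : Type*) [Field F] [CharZero F]
    (G : Type*) [AddCommGroup G] [DecidableEq G]
    (A : Type*) [Ring A] [Algebra F A]
    (𝒜 : G → Submodule F A) [GradedAlgebra 𝒜]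
    (χ : G → G → Fˣ)
    (hχ1 : ∀ g h k : G, χ (g + h) k = χ g k * χ h k)
    (hχ2 : ∀ g h k : G, χ g (h + k) = χ g h * χ g k)
    (L : Submodule F A) (hL : IsBracketClosed G 𝒜 χ L)
    (g h : G) (u v : A) (hu : u ∈ 𝒜 g) (hv : v ∈ 𝒜 h)
    (huL : u ∈ L) (hvL : v ∈ L)
    (hp : (χ g h : F) * (χ h g : F) ≠ 1)
    (hq : ((χ g g : F)) ^ 2 = 1) :
    ∀ m : ℕ, 0 < m → ∀ k : ℕ, k ≤ m → u ^ k * v * u ^ (m - k) ∈ L := by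
  intro m _
  exact stmt_6' F G A 𝒜 χ hχ1 hχ2 L hL.2 g h u v hu hv huL hvL hp hq m
end

section
/- Let L ⊆ A be a bracket-closed subspace and let u, v ∈ L be homogeneous with p_{uu}² ≠ 1 and uv ∈ L. Then u^k v u^l ∈ L for all k, l ∈ ℕ₀. -/
theorem stmt_7 (F : Type*) [Field F] [CharZero F]
    (G : Type*) [AddCommGroup G] [DecidableEq G]
    (A : Type*) [Ring A] [Algebra F A]
    (𝒜 : G → Submodule F A) [GradedAlgebra 𝒜]
    (χ : G → G → Fˣ)
    (hχ1 : ∀ g h k : G, χ (g + h) k = χ g k * χ h k)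
    (hχ2 : ∀ g h k : G, χ g (h + k) = χ g h * χ g k)
    (L : Submodule F A) (hL : IsBracketClosed G 𝒜 χ L)
    (g h : G) (u v : A) (hu : u ∈ 𝒜 g) (hv : v ∈ 𝒜 h)
    (huL : u ∈ L) (hvL : v ∈ L)
    (hq : ((χ g g : F)) ^ 2 ≠ 1)
    (huv : u * v ∈ L) :
    ∀ k l : ℕ, u ^ k * v * u ^ l ∈ L := by
  obtain ⟨-, Hbr⟩ := hL
  set q : F := (χ g g : F) with hqdef
  have hq1 : q ≠ 1 := fun h0 => hq (by rw [h0, one_pow])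
  -- u^2 ∈ L
  have huu : u * u ∈ L := by
    have h1 := Hbr g g u hu u hu huL huL
    have h2 : u * u - (χ g g : F) • (u * u) = (1 - q) • (u * u) := by
      rw [← hqdef, sub_smul, one_smul]
    rw [h2] at h1
    have h3 : (1 - q) ≠ 0 := sub_ne_zero.mpr (Ne.symm hq1)
    have h4 := L.smul_mem (1 - q)⁻¹ h1
    rwa [smul_smul, inv_mul_cancel₀ h3, one_smul] at h4
  -- degrees
  have hdeg : ∀ k l : ℕ, u ^ k * v * u ^ l ∈ 𝒜 ((k + l) • g + h) := by
    intro k l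
    have h1 : u ^ k * v * u ^ l ∈ 𝒜 (k • g + h + l • g) :=
      SetLike.mul_mem_graded
        (SetLike.mul_mem_graded (SetLike.pow_mem_graded k hu) hv)
        (SetLike.pow_mem_graded l hu)
    have he : (k + l) • g + h = k • g + h + l • g := by rw [add_nsmul]; abel
    rwa [he]
  have key : ∀ n : ℕ, ∀ k l : ℕ, k + l = n → u ^ k * v * u ^ l ∈ L := by
    intro n
    induction n using Nat.strong_induction_on with
    | _ n ih =>
      match n with
      | 0 =>
        intro k l hkl
        obtain ⟨rfl, rfl⟩ : k = 0 ∧ l = 0 := by omega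
        simpa using hvL
      | 1 =>
        intro k l hkl
        have hcase : (k = 0 ∧ l = 1) ∨ (k = 1 ∧ l = 0) := by omega
        rcases hcase with ⟨rfl, rfl⟩ | ⟨rfl, rfl⟩
        · have h1 := Hbr g h u hu v hv huL hvL
          have h2 := L.add_mem h1 (L.smul_mem ((χ h g : F)) huv)
          rw [sub_add_cancel] at h2
          simpa using h2
        · simpa using huv
      | (m + 2) =>
        set a : F := (χ (m • g + h) g : F) with ha
        have hane : a ≠ 0 := Units.ne_zero _
        have hc : (χ ((m + 1) • g + h) g : F) = a * q := by
          have he : (m + 1) • g + h = (m • g + h) + g := by rw [succ_nsmul]; abel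
          rw [he, hχ1, Units.val_mul]
        have hμ : (χ (m • g + h) (g + g) : F) = a * a := by
          rw [hχ2, Units.val_mul]
        have Y : ∀ k l : ℕ, k + l = m + 1 →
            u ^ k * v * u ^ (l + 1) - (a * q) • (u ^ (k + 1) * v * u ^ l) ∈ L := by
          intro k l hkl
          have hxL : u ^ k * v * u ^ l ∈ L := ih (m + 1) (by omega) k l hkl
          have hxd : u ^ k * v * u ^ l ∈ 𝒜 ((m + 1) • g + h) := by
            rw [← hkl]; exact hdeg k l
          have h1 := Hbr g ((m + 1) • g + h) u hu _ hxd huL hxL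
          rw [hc] at h1
          have e1 : (u ^ k * v * u ^ l) * u = u ^ k * v * u ^ (l + 1) := by
            rw [pow_succ, mul_assoc]
          have e2 : u * (u ^ k * v * u ^ l) = u ^ (k + 1) * v * u ^ l := by
            rw [pow_succ']; simp [mul_assoc]
          rw [e1, e2] at h1
          exact h1
        have Z : ∀ k l : ℕ, k + l = m →
            u ^ k * v * u ^ (l + 2) - (a * a) • (u ^ (k + 2) * v * u ^ l) ∈ L := by
          intro k l hkl
          have hxL : u ^ k * v * u ^ l ∈ L := ih m (by omega) k l hkl
          have hxd : u ^ k * v * u ^ l ∈ 𝒜 (m • g + h) := by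
            rw [← hkl]; exact hdeg k l
          have huud : u * u ∈ 𝒜 (g + g) := SetLike.mul_mem_graded hu hu
          have h1 := Hbr (g + g) (m • g + h) (u * u) huud _ hxd huu hxL
          rw [hμ] at h1
          have e1 : (u ^ k * v * u ^ l) * (u * u) = u ^ k * v * u ^ (l + 2) := by
            rw [show l + 2 = l + 1 + 1 from rfl, pow_succ, pow_succ]
            simp [mul_assoc]
          have e2 : (u * u) * (u ^ k * v * u ^ l) = u ^ (k + 2) * v * u ^ l := by
            rw [show k + 2 = k + 1 + 1 from rfl, pow_succ', pow_succ']
            simp [mul_assoc]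
          rw [e1, e2] at h1
          exact h1
        have hne : (a * q) ^ 2 - a * a ≠ 0 := by
          intro h0
          have h1 : a * a * (q ^ 2 - 1) = 0 := by linear_combination h0
          rcases mul_eq_zero.mp h1 with h2 | h2
          · exact absurd h2 (mul_ne_zero hane hane)
          · exact hq (by linear_combination h2)
        have hT : ∀ k l : ℕ, k + l = m + 2 → 2 ≤ k → u ^ k * v * u ^ l ∈ L := by
          intro k l hkl hk2
          obtain ⟨k', rfl⟩ : ∃ k', k = k' + 2 := ⟨k - 2, by omega⟩
          have hY1 := Y k' (l + 1) (by omega)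
          have hY2 := Y (k' + 1) l (by omega)
          have hZ := Z k' l (by omega)
          simp only [show l + 1 + 1 = l + 2 from rfl,
            show k' + 1 + 1 = k' + 2 from rfl] at hY1 hY2
          have hmem : ((a * q) ^ 2 - a * a) • (u ^ (k' + 2) * v * u ^ l) ∈ L := by
            have h1 := L.sub_mem (L.sub_mem hZ hY1) (L.smul_mem (a * q) hY2)
            convert h1 using 1
            module
          have h4 := L.smul_mem ((a * q) ^ 2 - a * a)⁻¹ hmem
          rwa [smul_smul, inv_mul_cancel₀ hne, one_smul] at h4
        have hX2 : u ^ 2 * v * u ^ m ∈ L := hT 2 m (by omega) (by omega)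
        have hX1 : u ^ 1 * v * u ^ (m + 1) ∈ L := by
          have hY := Y 1 m (by omega)
          norm_num at hY hX2 ⊢
          have h2 := L.add_mem hY (L.smul_mem (a * q) hX2)
          rwa [sub_add_cancel] at h2
        have hX0 : u ^ 0 * v * u ^ (m + 2) ∈ L := by
          have hY := Y 0 (m + 1) (by omega)
          have h2 := L.add_mem hY (L.smul_mem (a * q) hX1)
          rwa [sub_add_cancel] at h2
        intro k l hkl
        have hcase : (k = 0 ∧ l = m + 2) ∨ (k = 1 ∧ l = m + 1) ∨ 2 ≤ k := by omega
        rcases hcase with ⟨rfl, rfl⟩ | ⟨rfl, rfl⟩ | hk2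
        · exact hX0
        · exact hX1
        · exact hT k l hkl hk2
  intro k l
  exact key (k + l) k l rfl
end

section
/- Let L ⊆ A be a bracket-closed subspace and let u, v ∈ L be homogeneous with uv ∈ L. If p_{uv}p_{vu} ≠ 1 or p_{uu}² ≠ 1, then for every m ∈ ℕ all the elements u^m v, u^{m−1}vu, …, vu^m (that is, u^k v u^{m−k} for 0 ≤ k ≤ m) belong to L. -/
/-!
Write `x k l = u ^ k * v * u ^ l`, homogeneous of degree `d = (k + l) • g + h`. Bracketing a word
of level `n` in `L` with `u` on either side gives `x k (l+1) - q • x (k+1) l ∈ L` and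
`x (k+1) l - r • x k (l+1) ∈ L`, where `q = χ d g` and `r = χ g d`. The first relation carries
membership along a whole level once one word of it lies in `L`, and the two together give
`(1 - q r) • x 0 (n+1) ∈ L`. When `q r = 1`, two steps of the first relation at level `n + 1`
and the bracket of `x 0 n` with `u ^ 2 ∈ L` (note `[u, u] = (1 - χ g g) • u ^ 2`) give
`(1 - q² s) • x 0 (n+2) ∈ L` with `s = χ (2 • g) d`, and `q² s χ(g,g)² = (q r)² = 1`.
Since `q r = χ(g,g) ^ (2(n+1)) · p̃_{uv}`, the hypothesis rules out that both routes fail.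
-/

theorem Submodule.mem_of_sub_smul_mem_of_sub_smul_mem {F M : Type*} [DivisionRing F] [AddCommGroup M]
    [Module F M] {L : Submodule F M} {a b : M} {α β : F}
    (hab : a - α • b ∈ L) (hba : b - β • a ∈ L) (hαβ : α * β ≠ 1) : a ∈ L := by
  have key : (1 - α * β) • a = (a - α • b) + α • (b - β • a) := by
    rw [sub_smul, one_smul, mul_smul, smul_sub]
    abel
  rw [← L.smul_mem_iff (sub_ne_zero.mpr hαβ.symm), key]
  exact L.add_mem hab (L.smul_mem α hba)

section Bicharacter

variable {F G : Type*} [Field F] [AddCommGroup G] {χ : G → G → Fˣ}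

theorem bichar_nsmul_left (hχ1 : ∀ g h k : G, χ (g + h) k = χ g k * χ h k) (n : ℕ) (g k : G) :
    χ (n • g) k = χ g k ^ n :=
  map_nsmul (AddMonoidHom.mk' (fun g => Additive.ofMul (χ g k))
    fun a b => congrArg Additive.ofMul (hχ1 a b k)) n g

theorem bichar_nsmul_right (hχ2 : ∀ g h k : G, χ g (h + k) = χ g h * χ g k) (n : ℕ) (g k : G) :
    χ k (n • g) = χ k g ^ n :=
  map_nsmul (AddMonoidHom.mk' (fun g => Additive.ofMul (χ k g))
    fun a b => congrArg Additive.ofMul (hχ2 k a b)) n g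

theorem bichar_nsmul_add_mul_swap (hχ1 : ∀ g h k : G, χ (g + h) k = χ g k * χ h k)
    (hχ2 : ∀ g h k : G, χ g (h + k) = χ g h * χ g k) (n : ℕ) (g h : G) :
    (χ (n • g + h) g : F) * χ g (n • g + h) = ((χ g g : F) ^ 2) ^ n * (χ g h * χ h g) := by
  simp only [hχ1, hχ2, bichar_nsmul_left hχ1, bichar_nsmul_right hχ2, Units.val_mul,
    Units.val_pow_eq_pow_val]
  ring

theorem bichar_sq_mul_mul_sq (hχ1 : ∀ g h k : G, χ (g + h) k = χ g k * χ h k)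
    (hχ2 : ∀ g h k : G, χ g (h + k) = χ g h * χ g k) (d g : G) :
    (χ (d + g) g : F) * χ (d + g) g * χ (2 • g) d * (χ g g : F) ^ 2
      = ((χ (d + g) g : F) * χ g (d + g)) ^ 2 := by
  simp only [hχ2, bichar_nsmul_left hχ1, Units.val_mul, Units.val_pow_eq_pow_val]
  ring

end Bicharacter

/-- Words are indexed by both exponents, so the paper's `u ^ k v u ^ (m - k)` needs no truncated
subtraction. -/
def WordsMem {R A : Type*} [Semiring R] [Semiring A] [Module R A] (L : Submodule R A) (u v : A)
    (n : ℕ) : Prop :=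
  ∀ k l : ℕ, k + l = n → u ^ k * v * u ^ l ∈ L

theorem wordsMem_zero {R A : Type*} [Semiring R] [Semiring A] [Module R A] {L : Submodule R A}
    {u v : A} (hvL : v ∈ L) : WordsMem L u v 0 := by
  intro k l hkl
  obtain ⟨rfl, rfl⟩ : k = 0 ∧ l = 0 := by omega
  simpa using hvL

section Words

variable {F G A : Type*} [Field F] [AddCommGroup G] [Ring A] [Algebra F A]
  {𝒜 : G → Submodule F A} {χ : G → G → Fˣ} {L : Submodule F A}
  {g h : G} {u v : A}

theorem word_mul_pow (k l j : ℕ) : u ^ k * v * u ^ l * u ^ j = u ^ k * v * u ^ (l + j) := by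
  rw [mul_assoc _ (u ^ l), ← pow_add]

theorem pow_mul_word (j k l : ℕ) : u ^ j * (u ^ k * v * u ^ l) = u ^ (j + k) * v * u ^ l := by
  rw [← mul_assoc, ← mul_assoc, ← pow_add]

theorem word_mem_graded [SetLike.GradedMonoid 𝒜] (hu : u ∈ 𝒜 g) (hv : v ∈ 𝒜 h) (k l : ℕ) :
    u ^ k * v * u ^ l ∈ 𝒜 ((k + l) • g + h) := by
  have hkl := SetLike.mul_mem_graded (SetLike.mul_mem_graded (SetLike.pow_mem_graded k hu) hv)
    (SetLike.pow_mem_graded l hu)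
  rwa [add_right_comm, ← add_nsmul] at hkl

namespace IsBracketClosed

theorem sq_mem (hL : IsBracketClosed G 𝒜 χ L) (hu : u ∈ 𝒜 g) (huL : u ∈ L)
    (hc : (χ g g : F) ≠ 1) : u ^ 2 ∈ L := by
  have hsq : (1 - (χ g g : F)) • (u ^ 2) = u * u - (χ g g : F) • (u * u) := by
    rw [sq, sub_smul, one_smul]
  rw [← L.smul_mem_iff (sub_ne_zero.mpr hc.symm), hsq]
  exact hL.2 g g u hu u hu huL huL

theorem wordsMem_one (hL : IsBracketClosed G 𝒜 χ L) (hu : u ∈ 𝒜 g) (hv : v ∈ 𝒜 h)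
    (huL : u ∈ L) (hvL : v ∈ L) (huv : u * v ∈ L) : WordsMem L u v 1 := by
  have hvu : v * u ∈ L := by
    simpa using L.add_mem (hL.2 g h u hu v hv huL hvL) (L.smul_mem (χ h g : F) huv)
  intro k l hkl
  rcases (by omega : k = 0 ∧ l = 1 ∨ k = 1 ∧ l = 0) with ⟨rfl, rfl⟩ | ⟨rfl, rfl⟩
  · simpa using hvu
  · simpa using huv

variable [SetLike.GradedMonoid 𝒜]

theorem word_sub_smul_pow_mul_word_mem (hL : IsBracketClosed G 𝒜 χ L) (hu : u ∈ 𝒜 g)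
    (hv : v ∈ 𝒜 h) {j : ℕ} {e : G} (hj : u ^ j ∈ 𝒜 e) (hjL : u ^ j ∈ L) {k l n : ℕ}
    (hkl : k + l = n) (hw : u ^ k * v * u ^ l ∈ L) :
    u ^ k * v * u ^ (l + j) - (χ (n • g + h) e : F) • (u ^ (j + k) * v * u ^ l) ∈ L := by
  subst hkl
  simpa only [word_mul_pow, pow_mul_word] using
    hL.2 e _ _ hj _ (word_mem_graded hu hv k l) hjL hw

theorem pow_mul_word_sub_smul_word_mem (hL : IsBracketClosed G 𝒜 χ L) (hu : u ∈ 𝒜 g)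
    (hv : v ∈ 𝒜 h) {j : ℕ} {e : G} (hj : u ^ j ∈ 𝒜 e) (hjL : u ^ j ∈ L) {k l n : ℕ}
    (hkl : k + l = n) (hw : u ^ k * v * u ^ l ∈ L) :
    u ^ (j + k) * v * u ^ l - (χ e (n • g + h) : F) • (u ^ k * v * u ^ (l + j)) ∈ L := by
  subst hkl
  simpa only [word_mul_pow, pow_mul_word] using
    hL.2 _ e _ (word_mem_graded hu hv k l) _ hj hw hjL

theorem wordsMem_succ_of_mem (hL : IsBracketClosed G 𝒜 χ L) (hu : u ∈ 𝒜 g) (hv : v ∈ 𝒜 h)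
    (huL : u ∈ L) {n : ℕ} (hn : WordsMem L u v n) (hstart : v * u ^ (n + 1) ∈ L) :
    WordsMem L u v (n + 1) := by
  have hu1 : u ^ 1 ∈ 𝒜 g := by rwa [pow_one]
  have huL1 : u ^ 1 ∈ L := by rwa [pow_one]
  intro k
  induction k with
  | zero =>
    intro l hl
    obtain rfl : l = n + 1 := by omega
    simpa using hstart
  | succ k ih =>
    intro l hkl
    have hchain := hL.word_sub_smul_pow_mul_word_mem hu hv hu1 huL1 (by omega : k + l = n)
      (hn k l (by omega))
    rw [add_comm 1 k] at hchain
    have hq : (χ (n • g + h) g : F) • (u ^ (k + 1) * v * u ^ l) ∈ L := by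
      simpa using L.sub_mem (ih (l + 1) (by omega)) hchain
    exact (L.smul_mem_iff (Units.ne_zero _)).mp hq

theorem wordsMem_succ_of_nonresonant (hL : IsBracketClosed G 𝒜 χ L) (hu : u ∈ 𝒜 g)
    (hv : v ∈ 𝒜 h) (huL : u ∈ L) {n : ℕ} (hn : WordsMem L u v n)
    (hres : (χ (n • g + h) g : F) * χ g (n • g + h) ≠ 1) : WordsMem L u v (n + 1) := by
  have hu1 : u ^ 1 ∈ 𝒜 g := by rwa [pow_one]
  have huL1 : u ^ 1 ∈ L := by rwa [pow_one]
  have hw := hn 0 n (zero_add n)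
  refine hL.wordsMem_succ_of_mem hu hv huL hn ?_
  simpa using Submodule.mem_of_sub_smul_mem_of_sub_smul_mem
    (hL.word_sub_smul_pow_mul_word_mem hu hv hu1 huL1 (zero_add n) hw)
    (hL.pow_mul_word_sub_smul_word_mem hu hv hu1 huL1 (zero_add n) hw) hres

theorem wordsMem_add_two_of_resonant (hL : IsBracketClosed G 𝒜 χ L) (hu : u ∈ 𝒜 g)
    (hv : v ∈ 𝒜 h) (huL : u ∈ L) (hu2L : u ^ 2 ∈ L) {n : ℕ} (hn : WordsMem L u v n)
    (hn1 : WordsMem L u v (n + 1))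
    (hres : (χ (n • g + h + g) g : F) * χ (n • g + h + g) g * χ (2 • g) (n • g + h) ≠ 1) :
    WordsMem L u v (n + 2) := by
  have hu1 : u ^ 1 ∈ 𝒜 g := by rwa [pow_one]
  have huL1 : u ^ 1 ∈ L := by rwa [pow_one]
  have hdeg : (n + 1) • g + h = n • g + h + g := by rw [succ_nsmul, add_right_comm]
  have h01 := hL.word_sub_smul_pow_mul_word_mem hu hv hu1 huL1 (zero_add (n + 1))
    (hn1 0 (n + 1) (zero_add _))
  have h12 := hL.word_sub_smul_pow_mul_word_mem hu hv hu1 huL1 (add_comm 1 n)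
    (hn1 1 n (add_comm 1 n))
  have h20 := hL.pow_mul_word_sub_smul_word_mem hu hv (SetLike.pow_mem_graded 2 hu) hu2L
    (zero_add n) (hn 0 n (zero_add n))
  rw [hdeg] at h01 h12
  set q := (χ (n • g + h + g) g : F)
  have h02 : u ^ 0 * v * u ^ (n + 2) - (q * q) • (u ^ 2 * v * u ^ n) ∈ L := by
    convert L.add_mem h01 (L.smul_mem q h12) using 1
    module
  refine hL.wordsMem_succ_of_mem hu hv huL hn1 ?_
  simpa using Submodule.mem_of_sub_smul_mem_of_sub_smul_mem h02 h20 hres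

theorem wordsMem_add_two (hL : IsBracketClosed G 𝒜 χ L)
    (hχ1 : ∀ g h k : G, χ (g + h) k = χ g k * χ h k)
    (hχ2 : ∀ g h k : G, χ g (h + k) = χ g h * χ g k) (hu : u ∈ 𝒜 g) (hv : v ∈ 𝒜 h)
    (huL : u ∈ L) (hcond : (χ g h : F) * χ h g ≠ 1 ∨ (χ g g : F) ^ 2 ≠ 1) {n : ℕ}
    (hn : WordsMem L u v n) (hn1 : WordsMem L u v (n + 1)) : WordsMem L u v (n + 2) := by
  by_cases hqr : (χ ((n + 1) • g + h) g : F) * χ g ((n + 1) • g + h) = 1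
  · have hc : (χ g g : F) ^ 2 ≠ 1 := by
      intro hc
      rw [bichar_nsmul_add_mul_swap hχ1 hχ2, hc, one_pow, one_mul] at hqr
      exact hcond.elim (· hqr) (· hc)
    have hdeg : (n + 1) • g + h = n • g + h + g := by rw [succ_nsmul, add_right_comm]
    refine hL.wordsMem_add_two_of_resonant hu hv huL (hL.sq_mem hu huL ?_) hn hn1 ?_
    · intro hc1
      exact hc (by rw [hc1, one_pow])
    · intro hres
      have hsq := bichar_sq_mul_mul_sq hχ1 hχ2 (n • g + h) g
      rw [hres, one_mul, ← hdeg, hqr, one_pow] at hsq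
      exact hc hsq
  · exact hL.wordsMem_succ_of_nonresonant hu hv huL hn1 hqr

end IsBracketClosed

end Words

theorem stmt_8_general (F : Type*) [Field F]
    (G : Type*) [AddCommGroup G] [DecidableEq G]
    (A : Type*) [Ring A] [Algebra F A]
    (𝒜 : G → Submodule F A) [GradedAlgebra 𝒜]
    (χ : G → G → Fˣ)
    (hχ1 : ∀ g h k : G, χ (g + h) k = χ g k * χ h k)
    (hχ2 : ∀ g h k : G, χ g (h + k) = χ g h * χ g k)
    (L : Submodule F A) (hL : IsBracketClosed G 𝒜 χ L)
    (g h : G) (u v : A) (hu : u ∈ 𝒜 g) (hv : v ∈ 𝒜 h)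
    (huL : u ∈ L) (hvL : v ∈ L)
    (huv : u * v ∈ L)
    (hcond : (χ g h : F) * (χ h g : F) ≠ 1 ∨ ((χ g g : F)) ^ 2 ≠ 1) :
    ∀ m : ℕ, 0 < m → ∀ k : ℕ, k ≤ m → u ^ k * v * u ^ (m - k) ∈ L := by
  have hwords : ∀ n, WordsMem L u v n :=
    Nat.twoStepInduction (wordsMem_zero hvL) (hL.wordsMem_one hu hv huL hvL huv)
      fun _ hn hn1 => hL.wordsMem_add_two hχ1 hχ2 hu hv huL hcond hn hn1
  intro m _ k hk
  exact hwords m k (m - k) (by omega)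

theorem stmt_8 (F : Type*) [Field F] [CharZero F]
    (G : Type*) [AddCommGroup G] [DecidableEq G]
    (A : Type*) [Ring A] [Algebra F A]
    (𝒜 : G → Submodule F A) [GradedAlgebra 𝒜]
    (χ : G → G → Fˣ)
    (hχ1 : ∀ g h k : G, χ (g + h) k = χ g k * χ h k)
    (hχ2 : ∀ g h k : G, χ g (h + k) = χ g h * χ g k)
    (L : Submodule F A) (hL : IsBracketClosed G 𝒜 χ L)
    (g h : G) (u v : A) (hu : u ∈ 𝒜 g) (hv : v ∈ 𝒜 h)
    (huL : u ∈ L) (hvL : v ∈ L)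
    (huv : u * v ∈ L)
    (hcond : (χ g h : F) * (χ h g : F) ≠ 1 ∨ ((χ g g : F)) ^ 2 ≠ 1) :
    ∀ m : ℕ, 0 < m → ∀ k : ℕ, k ≤ m → u ^ k * v * u ^ (m - k) ∈ L :=
  stmt_8_general F G A 𝒜 χ hχ1 hχ2 L hL g h u v hu hv huL hvL huv hcond
end

section
/- Let L ⊆ A be a bracket-closed subspace, m ∈ ℕ, and let w_1, …, w_m ∈ L be homogeneous elements such that w_i² = 0 whenever p_{w_i w_i}² = 1 (1 ≤ i ≤ m). If p_{w_i w_j}·p_{w_j w_i} ≠ 1 whenever i ≠ j and w_i ≠ w_j, then the product w_1 w_2 ⋯ w_m lies in L + F·1. -/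
open DirectSum

theorem Submodule.isHomogeneous_span {ι R M : Type*} [DecidableEq ι] [Semiring R]
    [AddCommMonoid M] [Module R M] (ℳ : ι → Submodule R M) [Decomposition ℳ] (s : Set M)
    (hs : ∀ x ∈ s, SetLike.IsHomogeneousElem ℳ x) :
    SetLike.IsHomogeneous ℳ (span R s) := by
  intro i x hx
  induction hx using span_induction with
  | mem x hx =>
    obtain ⟨j, hj⟩ := hs x hx
    by_cases hji : j = i
    · subst hji
      rw [decompose_of_mem_same ℳ hj]
      exact subset_span hx
    · rw [decompose_of_mem_ne ℳ hj hji]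
      exact zero_mem _
  | zero => simp
  | add x y _ _ hx hy => simpa using add_mem hx hy
  | smul r x _ hx => simpa [DirectSum.smul_apply] using smul_mem _ r hx

theorem map_nsmul_of_map_add {G K : Type*} [AddMonoid G] [Group K] {f : G → K}
    (hf : ∀ g h, f (g + h) = f g * f h) (n : ℕ) (g : G) : f (n • g) = f g ^ n := by
  induction n with
  | zero => simpa using hf 0 0
  | succ n ih => rw [succ_nsmul, hf, ih, pow_succ]

section Words

variable {G A : Type*}

def wordProd [Monoid A] (l : List (G × A)) : A := (l.map Prod.snd).prod

def wordDeg [AddMonoid G] (l : List (G × A)) : G := (l.map Prod.fst).sum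

@[simp] theorem wordProd_cons [Monoid A] (p : G × A) (l : List (G × A)) :
    wordProd (p :: l) = p.2 * wordProd l := List.prod_cons

@[simp] theorem wordProd_append [Monoid A] (l l' : List (G × A)) :
    wordProd (l ++ l') = wordProd l * wordProd l' := by
  simp [wordProd]

@[simp] theorem wordDeg_nil [AddMonoid G] : wordDeg ([] : List (G × A)) = 0 := rfl

@[simp] theorem wordDeg_cons [AddMonoid G] (p : G × A) (l : List (G × A)) :
    wordDeg (p :: l) = p.1 + wordDeg l := List.sum_cons

@[simp] theorem wordDeg_append [AddMonoid G] (l l' : List (G × A)) :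
    wordDeg (l ++ l') = wordDeg l + wordDeg l' := by
  simp [wordDeg]

theorem wordProd_mem_graded [AddMonoid G] [Monoid A] {σ : Type*} [SetLike σ A] {𝒜 : G → σ}
    [SetLike.GradedMonoid 𝒜] {l : List (G × A)} (hl : ∀ p ∈ l, p.2 ∈ 𝒜 p.1) :
    wordProd l ∈ 𝒜 (wordDeg l) :=
  SetLike.list_prod_map_mem_graded l Prod.fst Prod.snd hl

end Words

namespace IsBracketClosed

variable {F G A : Type*} [Field F] [AddCommGroup G] [DecidableEq G] [Ring A] [Algebra F A]
  {𝒜 : G → Submodule F A} [GradedAlgebra 𝒜] {χ : G → G → Fˣ} {L : Submodule F A}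

theorem isHomogeneous (hL : IsBracketClosed G 𝒜 χ L) : SetLike.IsHomogeneous 𝒜 L := by
  have h := Submodule.isHomogeneous_span 𝒜 {a | a ∈ L ∧ ∃ g, a ∈ 𝒜 g} fun _ ha ↦ ha.2
  rwa [← hL.1] at h

theorem exists_eq_add_smul_one (hL : IsBracketClosed G 𝒜 χ L) {u : A} {e : G}
    (hu : u ∈ L ⊔ F ∙ 1) (hue : u ∈ 𝒜 e) : ∃ l ∈ L, l ∈ 𝒜 e ∧ ∃ c : F, u = l + c • 1 := by
  obtain ⟨l, hl, _, hc, rfl⟩ := Submodule.mem_sup.mp hu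
  obtain ⟨c, rfl⟩ := Submodule.mem_span_singleton.mp hc
  by_cases he : e = 0
  · subst he
    refine ⟨l, hl, ?_, c, rfl⟩
    simpa using sub_mem hue (Submodule.smul_mem _ c (SetLike.one_mem_graded 𝒜))
  · refine ⟨l + c • 1, ?_, hue, 0, by simp⟩
    have hone : (decompose 𝒜 (1 : A) e : A) = 0 :=
      decompose_of_mem_ne 𝒜 (SetLike.one_mem_graded 𝒜) (Ne.symm he)
    have hproj : (decompose 𝒜 (l + c • 1) e : A) = decompose 𝒜 l e := by
      simp only [decompose_add, decompose_smul, DirectSum.add_apply, DirectSum.smul_apply,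
        Submodule.coe_add, Submodule.coe_smul, hone, smul_zero, add_zero]
    rw [← decompose_of_mem_same 𝒜 hue, hproj]
    exact hL.isHomogeneous e hl

theorem mul_sub_smul_mul_mem (hL : IsBracketClosed G 𝒜 χ L) {u v : A} {e f : G}
    (hue : u ∈ 𝒜 e) (hvf : v ∈ 𝒜 f) (hu : u ∈ L ⊔ F ∙ 1) (hv : v ∈ L ⊔ F ∙ 1) :
    u * v - (χ e f : F) • (v * u) ∈ L ⊔ F ∙ 1 := by
  obtain ⟨l, hl, hle, c, rfl⟩ := hL.exists_eq_add_smul_one hu hue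
  obtain ⟨l', hl', hl'f, c', rfl⟩ := hL.exists_eq_add_smul_one hv hvf
  set γ : F := (χ e f : F)
  have hexpand : (l + c • 1) * (l' + c' • 1) - γ • ((l' + c' • 1) * (l + c • 1)) =
      (l * l' - γ • (l' * l)) + ((1 - γ) * c') • l + ((1 - γ) * c) • l' +
        ((1 - γ) * c * c') • (1 : A) := by
    simp only [mul_add, add_mul, smul_mul_assoc, mul_smul_comm, mul_one, one_mul]
    module
  have hbracket : l * l' - γ • (l' * l) ∈ L := hL.2 f e l' hl'f l hle hl' hl
  rw [hexpand]
  refine add_mem (add_mem (add_mem ?_ ?_) ?_) ?_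
  · exact Submodule.mem_sup_left hbracket
  · exact Submodule.smul_mem _ _ (Submodule.mem_sup_left hl)
  · exact Submodule.smul_mem _ _ (Submodule.mem_sup_left hl')
  · exact Submodule.smul_mem _ _ (Submodule.mem_sup_right (Submodule.mem_span_singleton_self 1))

theorem pow_add_mem (hL : IsBracketClosed G 𝒜 χ L)
    (hχ₁ : ∀ g h k : G, χ (g + h) k = χ g k * χ h k)
    (hχ₂ : ∀ g h k : G, χ g (h + k) = χ g h * χ g k) {u : A} {g : G} (hug : u ∈ 𝒜 g)
    {a b : ℕ} (ha : u ^ a ∈ L) (hb : u ^ b ∈ L) (hab : (χ g g : F) ^ (a * b) ≠ 1) :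
    u ^ (a + b) ∈ L := by
  have hχ : χ (b • g) (a • g) = χ g g ^ (a * b) := by
    have hleft : χ (b • g) (a • g) = χ g (a • g) ^ b :=
      map_nsmul_of_map_add (f := (χ · (a • g))) (hχ₁ · · _) b g
    rw [hleft, map_nsmul_of_map_add (hχ₂ g), ← pow_mul, mul_comm]
  have hbracket := hL.2 (a • g) (b • g) _ (SetLike.pow_mem_graded a hug) _
    (SetLike.pow_mem_graded b hug) ha hb
  rw [← pow_add, ← pow_add, add_comm b, hχ, Units.val_pow_eq_pow_val] at hbracket
  refine (Submodule.smul_mem_iff L (sub_ne_zero.mpr hab.symm)).mp ?_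
  rwa [sub_smul, one_smul]

theorem pow_mem (hL : IsBracketClosed G 𝒜 χ L)
    (hχ₁ : ∀ g h k : G, χ (g + h) k = χ g k * χ h k)
    (hχ₂ : ∀ g h k : G, χ g (h + k) = χ g h * χ g k) {u : A} {g : G} (hug : u ∈ 𝒜 g)
    (hu : u ∈ L) (hsq : (χ g g : F) ^ 2 = 1 → u * u = 0) {n : ℕ} (hn : n ≠ 0) :
    u ^ n ∈ L := by
  by_cases hq : (χ g g : F) ^ 2 = 1
  · obtain _ | _ | n := n
    · exact absurd rfl hn
    · simpa using hu
    · simp [pow_succ, mul_assoc, hsq hq]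
  induction n using Nat.strong_induction_on with
  | _ n ih =>
  obtain _ | _ | n := n
  · exact absurd rfl hn
  · simpa using hu
  by_cases hqn : (χ g g : F) ^ (n + 1) = 1
  · -- with `q = χ(g, g)`: `q ^ (n + 1) = 1` forces `q ^ (2n) = q ^ (-2) ≠ 1`
    have hn0 : n ≠ 0 := by rintro rfl; exact hq (by simp_all)
    refine hL.pow_add_mem hχ₁ hχ₂ hug (a := n) (b := 2) (ih n (by omega) hn0)
      (ih 2 (by omega) two_ne_zero) fun h ↦ hq ?_
    calc (χ g g : F) ^ 2 = (χ g g : F) ^ (n * 2) * (χ g g : F) ^ 2 := by rw [h, one_mul]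
      _ = ((χ g g : F) ^ (n + 1)) ^ 2 := by ring
      _ = 1 := by rw [hqn, one_pow]
  · exact hL.pow_add_mem hχ₁ hχ₂ hug (ih (n + 1) (by omega) n.succ_ne_zero)
      (ih 1 (by omega) one_ne_zero) (by simpa using hqn)

theorem mkQ_wordProd_append (hL : IsBracketClosed G 𝒜 χ L) {u v : List (G × A)}
    (hu : ∀ p ∈ u, p.2 ∈ 𝒜 p.1) (hv : ∀ p ∈ v, p.2 ∈ 𝒜 p.1)
    (huM : wordProd u ∈ L ⊔ F ∙ 1) (hvM : wordProd v ∈ L ⊔ F ∙ 1) :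
    (L ⊔ F ∙ 1).mkQ (wordProd (u ++ v)) =
      (χ (wordDeg u) (wordDeg v) : F) • (L ⊔ F ∙ 1).mkQ (wordProd (v ++ u)) := by
  rw [Submodule.mkQ_apply, Submodule.mkQ_apply, ← Submodule.Quotient.mk_smul,
    Submodule.Quotient.eq, wordProd_append, wordProd_append]
  exact hL.mul_sub_smul_mul_mem (wordProd_mem_graded hu) (wordProd_mem_graded hv) huM hvM

theorem wordProd_cons_cons_mem (hL : IsBracketClosed G 𝒜 χ L)
    (hχ₁ : ∀ g h k : G, χ (g + h) k = χ g k * χ h k)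
    (hχ₂ : ∀ g h k : G, χ g (h + k) = χ g h * χ g k) {a b : G × A} {rest : List (G × A)}
    (hgr : ∀ p ∈ a :: b :: rest, p.2 ∈ 𝒜 p.1) (hab : (χ a.1 b.1 : F) * χ b.1 a.1 ≠ 1)
    (ih : ∀ l : List (G × A), l.length < rest.length + 2 → l ⊆ a :: b :: rest →
      wordProd l ∈ L ⊔ F ∙ 1) :
    wordProd (a :: b :: rest) ∈ L ⊔ F ∙ 1 := by
  set π := (L ⊔ F ∙ (1 : A)).mkQ
  set R := wordDeg rest
  have hgr' (l : List (G × A)) (hl : l ⊆ a :: b :: rest) : ∀ p ∈ l, p.2 ∈ 𝒜 p.1 :=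
    fun p hp ↦ hgr p (hl hp)
  have ih' (l : List (G × A)) (hl : l ⊆ a :: b :: rest)
      (hlen : l.length < rest.length + 2 := by simp) : wordProd l ∈ L ⊔ F ∙ 1 :=
    ih l hlen hl
  -- two routes from `a b rest` to `rest a b`: moving `a`, then `b`, or the block `a b` at once
  have h₁ : π (wordProd (a :: b :: rest)) =
      (χ a.1 (b.1 + R) : F) • π (wordProd (b :: rest ++ [a])) := by
    simpa [π, R] using hL.mkQ_wordProd_append (u := [a]) (v := b :: rest) (hgr' _ (by simp))
      (hgr' _ (by simp)) (ih' _ (by simp)) (ih' _ (by simp))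
  have h₂ : π (wordProd (b :: rest ++ [a])) =
      (χ b.1 (R + a.1) : F) • π (wordProd (rest ++ [a, b])) := by
    simpa [π, R] using hL.mkQ_wordProd_append (u := [b]) (v := rest ++ [a]) (hgr' _ (by simp))
      (hgr' _ (by simp)) (ih' _ (by simp)) (ih' _ (by simp))
  have h₃ : π (wordProd (a :: b :: rest)) =
      (χ (a.1 + b.1) R : F) • π (wordProd (rest ++ [a, b])) := by
    rcases rest with _ | ⟨c, rest⟩
    · have hχ0 : χ (a.1 + b.1) 0 = 1 := by simpa using hχ₂ (a.1 + b.1) 0 0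
      simp [R, hχ0]
    · simpa [π, R] using hL.mkQ_wordProd_append (u := [a, b]) (v := c :: rest)
        (hgr' _ (by simp)) (hgr' _ (by simp)) (ih' _ (by simp)) (ih' _ (by simp))
  -- the scalars of the two routes differ by the factor `χ(a,b) χ(b,a) ≠ 1`
  have hne : (χ a.1 (b.1 + R) : F) * χ b.1 (R + a.1) - χ (a.1 + b.1) R ≠ 0 := by
    rw [hχ₁, hχ₂, hχ₂]
    push_cast
    have hR : (χ a.1 R : F) * χ b.1 R ≠ 0 := by simp
    intro h
    apply hab
    apply mul_right_cancel₀ hR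
    linear_combination h
  have hY : π (wordProd (rest ++ [a, b])) = 0 := by
    refine (smul_eq_zero.mp ?_).resolve_left hne
    rw [sub_smul, mul_smul, ← h₂, ← h₁, ← h₃, sub_self]
  rw [← Submodule.Quotient.mk_eq_zero, ← Submodule.mkQ_apply, h₃, hY, smul_zero]

theorem wordProd_mem (hL : IsBracketClosed G 𝒜 χ L)
    (hχ₁ : ∀ g h k : G, χ (g + h) k = χ g k * χ h k)
    (hχ₂ : ∀ g h k : G, χ g (h + k) = χ g h * χ g k) {T : Set (G × A)}
    (hT𝒜 : ∀ p ∈ T, p.2 ∈ 𝒜 p.1) (hTL : ∀ p ∈ T, p.2 ∈ L)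
    (hTsq : ∀ p ∈ T, (χ p.1 p.1 : F) ^ 2 = 1 → p.2 * p.2 = 0)
    (hTne : ∀ p ∈ T, ∀ q ∈ T, p.2 ≠ q.2 → (χ p.1 q.1 : F) * χ q.1 p.1 ≠ 1)
    (l : List (G × A)) (hl : ∀ p ∈ l, p ∈ T) : wordProd l ∈ L ⊔ F ∙ 1 := by
  have ih (l' : List (G × A)) (hlen : l'.length < l.length) (hl' : l' ⊆ l) :
      wordProd l' ∈ L ⊔ F ∙ 1 :=
    wordProd_mem hL hχ₁ hχ₂ hT𝒜 hTL hTsq hTne l' fun p hp ↦ hl p (hl' hp)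
  by_cases hconst : (l.map Prod.snd).IsChain (· = ·)
  · rcases l with _ | ⟨a, t⟩
    · exact Submodule.mem_sup_right (Submodule.mem_span_singleton_self 1)
    rw [List.map_cons, List.isChain_cons_eq_iff_eq_replicate, List.length_map] at hconst
    have hpow : wordProd (a :: t) = a.2 ^ (t.length + 1) := by
      rw [wordProd_cons, wordProd, hconst, List.prod_replicate, pow_succ']
    have ha : a ∈ T := hl a List.mem_cons_self
    rw [hpow]
    exact Submodule.mem_sup_left
      (hL.pow_mem hχ₁ hχ₂ (hT𝒜 a ha) (hTL a ha) (hTsq a ha) t.length.succ_ne_zero)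
  rw [List.isChain_map, List.isChain_iff_forall_rel_of_append_cons_cons] at hconst
  push Not at hconst
  obtain ⟨a, b, pre, suf, rfl, hab⟩ := hconst
  have hperm : (a :: b :: (suf ++ pre)).Perm (pre ++ a :: b :: suf) := by
    simpa using List.perm_append_comm (l₁ := a :: b :: suf) (l₂ := pre)
  have hfront : wordProd (a :: b :: (suf ++ pre)) ∈ L ⊔ F ∙ 1 :=
    hL.wordProd_cons_cons_mem hχ₁ hχ₂ (fun p hp ↦ hT𝒜 p (hl p (hperm.subset hp)))
      (hTne a (hl a (by simp)) b (hl b (by simp)) hab)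
      fun l' hlen hl' ↦
        ih l' (hlen.trans_eq hperm.length_eq) (List.Subset.trans hl' hperm.subset)
  rcases pre with _ | ⟨c, pre⟩
  · simpa using hfront
  have hrot := hL.mkQ_wordProd_append (u := c :: pre) (v := a :: b :: suf)
    (fun p hp ↦ hT𝒜 p (hl p (List.mem_append_left _ hp)))
    (fun p hp ↦ hT𝒜 p (hl p (List.mem_append_right _ hp)))
    (ih _ (by simp) (by simp)) (ih _ (by simp) (by simp))
  rw [← Submodule.Quotient.mk_eq_zero, ← Submodule.mkQ_apply, hrot, Submodule.mkQ_apply,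
    (Submodule.Quotient.mk_eq_zero _).mpr (by simpa using hfront), smul_zero]
termination_by l.length

end IsBracketClosed

theorem stmt_9_general (F : Type*) [Field F]
    (G : Type*) [AddCommGroup G] [DecidableEq G]
    (A : Type*) [Ring A] [Algebra F A]
    (𝒜 : G → Submodule F A) [GradedAlgebra 𝒜]
    (χ : G → G → Fˣ)
    (hχ1 : ∀ g h k : G, χ (g + h) k = χ g k * χ h k)
    (hχ2 : ∀ g h k : G, χ g (h + k) = χ g h * χ g k)
    (L : Submodule F A) (hL : IsBracketClosed G 𝒜 χ L)
    (m : ℕ)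
    (d : Fin m → G) (w : Fin m → A)
    (hhom : ∀ i, w i ∈ 𝒜 (d i)) (hwL : ∀ i, w i ∈ L)
    (hsq : ∀ i, ((χ (d i) (d i) : F)) ^ 2 = 1 → w i * w i = 0)
    (hne : ∀ i j, i ≠ j → w i ≠ w j →
      (χ (d i) (d j) : F) * (χ (d j) (d i) : F) ≠ 1) :
    (List.ofFn w).prod ∈ L ⊔ Submodule.span F {(1 : A)} := by
  have hword : wordProd (List.ofFn fun i ↦ (d i, w i)) = (List.ofFn w).prod := by
    rw [wordProd, List.map_ofFn]
    rfl
  rw [← hword]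
  refine hL.wordProd_mem hχ1 hχ2 (T := Set.range fun i ↦ (d i, w i)) ?_ ?_ ?_ ?_ _
    (fun p hp ↦ List.mem_ofFn.mp hp)
  · rintro _ ⟨i, rfl⟩
    exact hhom i
  · rintro _ ⟨i, rfl⟩
    exact hwL i
  · rintro _ ⟨i, rfl⟩
    exact hsq i
  · rintro _ ⟨i, rfl⟩ _ ⟨j, rfl⟩ hij
    exact hne i j (fun h ↦ hij (congrArg w h)) hij

theorem stmt_9 (F : Type*) [Field F] [CharZero F]
    (G : Type*) [AddCommGroup G] [DecidableEq G]
    (A : Type*) [Ring A] [Algebra F A]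
    (𝒜 : G → Submodule F A) [GradedAlgebra 𝒜]
    (χ : G → G → Fˣ)
    (hχ1 : ∀ g h k : G, χ (g + h) k = χ g k * χ h k)
    (hχ2 : ∀ g h k : G, χ g (h + k) = χ g h * χ g k)
    (L : Submodule F A) (hL : IsBracketClosed G 𝒜 χ L)
    (m : ℕ) (hm : 0 < m)
    (d : Fin m → G) (w : Fin m → A)
    (hhom : ∀ i, w i ∈ 𝒜 (d i)) (hwL : ∀ i, w i ∈ L)
    (hsq : ∀ i, ((χ (d i) (d i) : F)) ^ 2 = 1 → w i * w i = 0)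
    (hne : ∀ i j, i ≠ j → w i ≠ w j →
      (χ (d i) (d j) : F) * (χ (d j) (d i) : F) ≠ 1) :
    (List.ofFn w).prod ∈ L ⊔ Submodule.span F {(1 : A)} :=
  stmt_9_general F G A 𝒜 χ hχ1 hχ2 L hL m d w hhom hwL hsq hne
end

section
/- Let L ⊆ A be a bracket-closed subspace, m ∈ ℕ, and let w_1, …, w_m ∈ L be homogeneous elements such that w_i² = 0 whenever p_{w_i w_i}² = 1 (1 ≤ i ≤ m). If p_{w_i w_j}·p_{w_j w_i} ≠ 1 whenever i ≠ j and w_i ≠ w_j, then for all exponents a_1, …, a_m ∈ ℕ₀ the product w_1^{a_1} w_2^{a_2} ⋯ w_m^{a_m} lies in L + F·1. -/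
theorem map_nsmul_eq_pow_of_map_add {M N : Type*} [AddMonoid M] [Group N] (f : M → N)
    (hf : ∀ a b, f (a + b) = f a * f b) (n : ℕ) (a : M) : f (n • a) = f a ^ n := by
  have hf0 : f 0 = 1 := by simpa using hf 0 0
  induction n with
  | zero => simpa using hf0
  | succ n ih => rw [succ_nsmul, hf, ih, pow_succ]

theorem List.prod_ofFn_pow_eq_prod_map_flatten {M : Type*} [Monoid M] {m : ℕ} (w : Fin m → M)
    (a : Fin m → ℕ) :
    (List.ofFn fun i => w i ^ a i).prod =
      (((List.ofFn fun i => List.replicate (a i) i).flatten).map w).prod := by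
  simp [List.map_flatten, List.prod_flatten, List.map_ofFn, Function.comp_def,
    List.map_replicate, List.prod_replicate]

namespace IsBracketClosed

variable {F A G : Type*} [Field F] [AddCommGroup G] [Ring A] [Algebra F A]
  {𝒜 : G → Submodule F A} {χ : G → G → Fˣ} {L : Submodule F A}

theorem mul_mem_of_mul_mem_swap (hL : IsBracketClosed G 𝒜 χ L) {g h : G} {u v : A}
    (hu : u ∈ 𝒜 g) (hv : v ∈ 𝒜 h) (huL : u ∈ L) (hvL : v ∈ L) (huv : u * v ∈ L) :
    v * u ∈ L := by
  simpa using L.add_mem (hL.2 g h u hu v hv huL hvL) (L.smul_mem (χ h g : F) huv)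

theorem mul_mem (hL : IsBracketClosed G 𝒜 χ L) {g h : G} {u v : A}
    (hu : u ∈ 𝒜 g) (hv : v ∈ 𝒜 h) (huL : u ∈ L) (hvL : v ∈ L)
    (hq : (χ g h : F) * (χ h g : F) ≠ 1) : u * v ∈ L := by
  have hsum := L.add_mem (hL.2 h g v hv u hu hvL huL)
    (L.smul_mem (χ g h : F) (hL.2 g h u hu v hv huL hvL))
  have key : (u * v - (χ g h : F) • (v * u)) +
      (χ g h : F) • (v * u - (χ h g : F) • (u * v)) =
      (1 - (χ g h : F) * (χ h g : F)) • (u * v) := by module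
  rwa [key, Submodule.smul_mem_iff _ (sub_ne_zero.mpr (Ne.symm hq))] at hsum

theorem mul_mul_mem [SetLike.GradedMonoid 𝒜] (hL : IsBracketClosed G 𝒜 χ L)
    (hχ1 : ∀ g h k : G, χ (g + h) k = χ g k * χ h k)
    (hχ2 : ∀ g h k : G, χ g (h + k) = χ g h * χ g k)
    {g h γ : G} {x y c : A} (hx : x ∈ 𝒜 g) (hy : y ∈ 𝒜 h) (hc : c ∈ 𝒜 γ)
    (hxL : x ∈ L) (hyL : y ∈ L) (hcL : c ∈ L)
    (hyc : y * c ∈ L) (hxy : x * y ∈ L) (hcx : c * x ∈ L)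
    (hq : (χ g h : F) * (χ h g : F) ≠ 1) : x * (y * c) ∈ L := by
  have r1 := hL.2 g (h + γ) x hx (y * c) (SetLike.mul_mem_graded hy hc) hxL hyc
  have r2 := hL.2 (g + h) γ (x * y) (SetLike.mul_mem_graded hx hy) c hc hxy hcL
  have r3 := hL.2 h (γ + g) y hy (c * x) (SetLike.mul_mem_graded hc hx) hyL hcx
  rw [hχ1, Units.val_mul] at r1 r3
  rw [hχ2, Units.val_mul] at r2
  have hE := L.sub_mem (L.sub_mem r2 r3) (L.smul_mem ((χ γ h : F) * (χ g h : F)) r1)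
  have key : (c * (x * y) - ((χ γ g : F) * (χ γ h : F)) • ((x * y) * c)) -
      ((c * x) * y - ((χ γ h : F) * (χ g h : F)) • (y * (c * x))) -
      ((χ γ h : F) * (χ g h : F)) •
        ((y * c) * x - ((χ h g : F) * (χ γ g : F)) • (x * (y * c))) =
      (((χ γ g : F) * (χ γ h : F)) * ((χ g h : F) * (χ h g : F) - 1)) • (x * (y * c)) := by
    simp only [mul_assoc]
    module
  rwa [key, Submodule.smul_mem_iff _ (mul_ne_zero (mul_ne_zero (Units.ne_zero _)
    (Units.ne_zero _)) (sub_ne_zero.mpr hq))] at hE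

theorem pow_add_mem_s10 [SetLike.GradedMonoid 𝒜] (hL : IsBracketClosed G 𝒜 χ L)
    (hχ1 : ∀ g h k : G, χ (g + h) k = χ g k * χ h k)
    (hχ2 : ∀ g h k : G, χ g (h + k) = χ g h * χ g k)
    {g : G} {x : A} (hx : x ∈ 𝒜 g) {j k : ℕ} (hj : x ^ j ∈ L) (hk : x ^ k ∈ L)
    (hq : (χ g g : F) ^ (j * k) ≠ 1) : x ^ (j + k) ∈ L := by
  have hbr := hL.2 (j • g) (k • g) (x ^ j) (SetLike.pow_mem_graded _ hx) (x ^ k)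
    (SetLike.pow_mem_graded _ hx) hj hk
  have hχ : χ (k • g) (j • g) = χ g g ^ (j * k) := by
    rw [map_nsmul_eq_pow_of_map_add (χ · (j • g)) (hχ1 · · _), map_nsmul_eq_pow_of_map_add (χ g)
      (hχ2 g), ← pow_mul, mul_comm]
  have hsmul : (1 - (χ g g : F) ^ (j * k)) • x ^ (j + k) ∈ L := by
    convert hbr using 1
    rw [hχ, Units.val_pow_eq_pow_val, ← pow_add, ← pow_add, add_comm k j]
    module
  exact (Submodule.smul_mem_iff _ (sub_ne_zero.mpr (Ne.symm hq))).mp hsmul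

theorem pow_succ_mem [SetLike.GradedMonoid 𝒜] (hL : IsBracketClosed G 𝒜 χ L)
    (hχ1 : ∀ g h k : G, χ (g + h) k = χ g k * χ h k)
    (hχ2 : ∀ g h k : G, χ g (h + k) = χ g h * χ g k)
    {g : G} {x : A} (hx : x ∈ 𝒜 g) (hxL : x ∈ L) (hsq : (χ g g : F) ^ 2 = 1 → x * x = 0)
    (n : ℕ) : x ^ (n + 1) ∈ L := by
  set q : F := (χ g g : F)
  induction n using Nat.strong_induction_on with
  | _ n IH =>
  rcases n with _ | n
  · simpa using hxL
  by_cases hq2 : q ^ 2 = 1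
  · rw [pow_succ, pow_succ, mul_assoc, hsq hq2, mul_zero]
    exact L.zero_mem
  by_cases hqn : q ^ (n + 1) = 1
  · -- then `q ^ (2 n) = q⁻² ≠ 1`, so split `x ^ (n + 2) = x ^ n * x ^ 2` instead
    obtain ⟨m, rfl⟩ : ∃ m, n = m + 1 := Nat.exists_eq_add_one.mpr <| Nat.pos_of_ne_zero <| by
      rintro rfl
      rw [zero_add, pow_one] at hqn
      exact hq2 (by rw [hqn, one_pow])
    have hq : q ^ ((m + 1) * 2) ≠ 1 := by
      intro h
      apply hq2
      calc q ^ 2 = q ^ ((m + 1) * 2) * q ^ 2 := by rw [h, one_mul]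
        _ = (q ^ (m + 1 + 1)) ^ 2 := by ring
        _ = 1 := by rw [hqn, one_pow]
    exact hL.pow_add_mem_s10 (j := m + 1) (k := 2) hχ1 hχ2 hx (IH m (by omega)) (IH 1 (by omega)) hq
  · exact hL.pow_add_mem_s10 hχ1 hχ2 hx (IH n (by omega)) (by simpa using hxL) (by simpa using hqn)

section Words

variable [SetLike.GradedMonoid 𝒜] (hL : IsBracketClosed G 𝒜 χ L)
  (hχ1 : ∀ g h k : G, χ (g + h) k = χ g k * χ h k)
  (hχ2 : ∀ g h k : G, χ g (h + k) = χ g h * χ g k)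
  {ι : Type*} {d : ι → G} {w : ι → A} (hhom : ∀ i, w i ∈ 𝒜 (d i)) (hwL : ∀ i, w i ∈ L)
include hL hχ1 hχ2 hhom hwL

theorem cons_cons_prod_mem {s t : ι} (hq : (χ (d s) (d t) : F) * (χ (d t) (d s) : F) ≠ 1)
    {n : ℕ} (IH : ∀ l : List ι, l.length < n → l ≠ [] → (l.map w).prod ∈ L)
    (C : List ι) (hn : C.length + 2 ≤ n) : w s * (w t * (C.map w).prod) ∈ L := by
  rcases eq_or_ne C [] with rfl | hC
  · simpa using hL.mul_mem (hhom s) (hhom t) (hwL s) (hwL t) hq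
  have hC0 := List.length_pos_of_ne_nil hC
  refine hL.mul_mul_mem hχ1 hχ2 (hhom s) (hhom t)
    (SetLike.list_prod_map_mem_graded _ d w fun j _ => hhom j) (hwL s) (hwL t)
    (IH C (by omega) hC) ?_ ?_ ?_ hq
  · simpa using IH (t :: C) (by simp; omega) (by simp)
  · simpa using IH [s, t] (by simp; omega) (by simp)
  · simpa [mul_assoc] using IH (C ++ [s]) (by simp; omega) (by simp)

theorem append_cons_cons_prod_mem {s t : ι}
    (hq : (χ (d s) (d t) : F) * (χ (d t) (d s) : F) ≠ 1) (P B : List ι)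
    (IH : ∀ l : List ι, l.length < (P ++ s :: t :: B).length → l ≠ [] → (l.map w).prod ∈ L) :
    ((P ++ s :: t :: B).map w).prod ∈ L := by
  have hlen : (P ++ s :: t :: B).length = P.length + B.length + 2 := by simp; omega
  rcases eq_or_ne P [] with rfl | hP
  · simpa using hL.cons_cons_prod_mem hχ1 hχ2 hhom hwL hq IH B (by simp)
  have hP0 := List.length_pos_of_ne_nil hP
  have hrot := hL.cons_cons_prod_mem hχ1 hχ2 hhom hwL hq IH (B ++ P) (by simp; omega)
  have hswap := hL.mul_mem_of_mul_mem_swap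
    (SetLike.list_prod_map_mem_graded _ d w fun j _ => hhom j)
    (SetLike.list_prod_map_mem_graded _ d w fun j _ => hhom j)
    (IH (s :: t :: B) (by simp; omega) (by simp)) (IH P (by omega) hP)
    (by simpa [mul_assoc] using hrot)
  simpa [mul_assoc] using hswap

theorem list_prod_map_mem (hsq : ∀ i, (χ (d i) (d i) : F) ^ 2 = 1 → w i * w i = 0)
    (hne : ∀ i j, w i ≠ w j → (χ (d i) (d j) : F) * (χ (d j) (d i) : F) ≠ 1)
    (l : List ι) (hl : l ≠ []) : (l.map w).prod ∈ L := by
  induction hlen : l.length using Nat.strong_induction_on generalizing l with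
  | _ n IH =>
  subst hlen
  replace IH : ∀ l' : List ι, l'.length < l.length → l' ≠ [] → (l'.map w).prod ∈ L :=
    fun l' hl' hne => IH _ hl' l' hne rfl
  by_cases hchain : (l.map w).IsChain (· = ·)
  · obtain ⟨i, r, rfl⟩ := List.exists_cons_of_ne_nil hl
    rw [List.map_cons, List.isChain_cons_eq_iff_eq_replicate] at hchain
    rw [List.map_cons, List.prod_cons, hchain, List.prod_replicate, ← pow_succ']
    exact hL.pow_succ_mem hχ1 hχ2 (hhom i) (hwL i) (hsq i) _
  · rw [List.isChain_map, List.isChain_iff_forall_rel_of_append_cons_cons] at hchain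
    push Not at hchain
    obtain ⟨s, t, P, B, rfl, hst⟩ := hchain
    exact hL.append_cons_cons_prod_mem hχ1 hχ2 hhom hwL (hne s t hst) P B IH

end Words

end IsBracketClosed

theorem stmt_10_general (F : Type*) [Field F]
    (G : Type*) [AddCommGroup G] [DecidableEq G]
    (A : Type*) [Ring A] [Algebra F A]
    (𝒜 : G → Submodule F A) [GradedAlgebra 𝒜]
    (χ : G → G → Fˣ)
    (hχ1 : ∀ g h k : G, χ (g + h) k = χ g k * χ h k)
    (hχ2 : ∀ g h k : G, χ g (h + k) = χ g h * χ g k)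
    (L : Submodule F A) (hL : IsBracketClosed G 𝒜 χ L)
    (m : ℕ)
    (d : Fin m → G) (w : Fin m → A)
    (hhom : ∀ i, w i ∈ 𝒜 (d i)) (hwL : ∀ i, w i ∈ L)
    (hsq : ∀ i, ((χ (d i) (d i) : F)) ^ 2 = 1 → w i * w i = 0)
    (hne : ∀ i j, i ≠ j → w i ≠ w j →
      (χ (d i) (d j) : F) * (χ (d j) (d i) : F) ≠ 1)
    (a : Fin m → ℕ) :
    (List.ofFn fun i => w i ^ a i).prod ∈ L ⊔ Submodule.span F {(1 : A)} := by
  rw [List.prod_ofFn_pow_eq_prod_map_flatten]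
  rcases eq_or_ne (List.ofFn fun i => List.replicate (a i) i).flatten [] with hl | hl
  · rw [hl, List.map_nil, List.prod_nil]
    exact Submodule.mem_sup_right (Submodule.mem_span_singleton_self 1)
  · refine Submodule.mem_sup_left (hL.list_prod_map_mem hχ1 hχ2 hhom hwL hsq ?_ _ hl)
    exact fun i j hw => hne i j (fun h => hw (congrArg w h)) hw

theorem stmt_10 (F : Type*) [Field F] [CharZero F]
    (G : Type*) [AddCommGroup G] [DecidableEq G]
    (A : Type*) [Ring A] [Algebra F A]
    (𝒜 : G → Submodule F A) [GradedAlgebra 𝒜]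
    (χ : G → G → Fˣ)
    (hχ1 : ∀ g h k : G, χ (g + h) k = χ g k * χ h k)
    (hχ2 : ∀ g h k : G, χ g (h + k) = χ g h * χ g k)
    (L : Submodule F A) (hL : IsBracketClosed G 𝒜 χ L)
    (m : ℕ) (hm : 0 < m)
    (d : Fin m → G) (w : Fin m → A)
    (hhom : ∀ i, w i ∈ 𝒜 (d i)) (hwL : ∀ i, w i ∈ L)
    (hsq : ∀ i, ((χ (d i) (d i) : F)) ^ 2 = 1 → w i * w i = 0)
    (hne : ∀ i j, i ≠ j → w i ≠ w j →
      (χ (d i) (d j) : F) * (χ (d j) (d i) : F) ≠ 1)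
    (a : Fin m → ℕ) :
    (List.ofFn fun i => w i ^ a i).prod ∈ L ⊔ Submodule.span F {(1 : A)} :=
  stmt_10_general F G A 𝒜 χ hχ1 hχ2 L hL m d w hhom hwL hsq hne a
end

section
/- Let L ⊆ A be a bracket-closed subspace and let u ∈ A_g, v ∈ A_h be homogeneous elements of L such that χ(g+h, g+h)² ≠ 1 (i.e. (p_{uu}p_{uv}p_{vu}p_{vv})² ≠ 1), such that uv, uvu and vuv all lie in L, such that u² = 0 if p_{uu}² = 1, and such that v² = 0 if p_{vv}² = 1. Then for every m ∈ ℕ and all exponents a_1, b_1, …, a_m, b_m ∈ ℕ₀ the product u^{a_1} v^{b_1} u^{a_2} v^{b_2} ⋯ u^{a_m} v^{b_m} lies in L + F·1. -/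
set_option linter.unusedSectionVars false
set_option linter.unnecessarySeqFocus false

section BraidedAux

variable {F : Type*} [Field F] {G : Type*} [AddCommGroup G]
  {A : Type*} [Ring A] [Algebra F A]

/-- value of a letter: `false ↦ u`, `true ↦ v`. -/
def wval (u v : A) (x : Bool) : A := bif x then v else u

/-- degree of a letter: `false ↦ g`, `true ↦ h`. -/
def wdg (g h : G) (x : Bool) : G := bif x then h else g

/-- product of a word -/
def wP (u v : A) (w : List Bool) : A := (w.map (wval u v)).prod

/-- degree of a word -/
def wD (g h : G) (w : List Bool) : G := (w.map (wdg g h)).sum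

lemma wP_nil (u v : A) : wP u v [] = 1 := rfl

lemma wP_append (u v : A) (p t : List Bool) :
    wP u v (p ++ t) = wP u v p * wP u v t := by
  simp [wP]

lemma wP_cons (u v : A) (x : Bool) (t : List Bool) :
    wP u v (x :: t) = wval u v x * wP u v t := by
  simp [wP]

lemma wD_nil (g h : G) : wD g h [] = 0 := rfl

lemma wD_append (g h : G) (p t : List Bool) :
    wD g h (p ++ t) = wD g h p + wD g h t := by
  simp [wD]

lemma wD_cons (g h : G) (x : Bool) (t : List Bool) :
    wD g h (x :: t) = wdg g h x + wD g h t := by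
  simp [wD]

lemma wD_singleton (g h : G) (x : Bool) : wD g h [x] = wdg g h x := by
  simp [wD]

lemma wD_comm (g h : G) (p t : List Bool) :
    wD g h (p ++ t) = wD g h (t ++ p) := by
  rw [wD_append, wD_append, add_comm]

lemma wP_mem_graded [DecidableEq G] (𝒜 : G → Submodule F A) [GradedAlgebra 𝒜]
    {g h : G} {u v : A} (hu : u ∈ 𝒜 g) (hv : v ∈ 𝒜 h) (w : List Bool) :
    wP u v w ∈ 𝒜 (wD g h w) := by
  induction w with
  | nil => simpa [wP_nil, wD_nil] using SetLike.one_mem_graded 𝒜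
  | cons x t ih =>
      rw [wP_cons, wD_cons]
      refine SetLike.mul_mem_graded ?_ ih
      cases x <;> simpa [wval, wdg]

end BraidedAux
section BraidedAux2

variable {F : Type*} [Field F] {G : Type*} [AddCommGroup G] [DecidableEq G]
  {A : Type*} [Ring A] [Algebra F A]

/-- the "rotation relation": `P w − c • P w' ∈ L`. -/
def wRel (L : Submodule F A) (u v : A) (c : Fˣ) (w w' : List Bool) : Prop :=
  wP u v w - (c : F) • wP u v w' ∈ L

lemma wRel_refl (L : Submodule F A) (u v : A) (w : List Bool) :
    wRel L u v 1 w w := by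
  simp [wRel]

lemma wRel_trans {L : Submodule F A} {u v : A} {c c' : Fˣ} {w w' w'' : List Bool}
    (h1 : wRel L u v c w w') (h2 : wRel L u v c' w' w'') :
    wRel L u v (c * c') w w'' := by
  have h3 := L.add_mem h1 (L.smul_mem (c : F) h2)
  have e : wP u v w - (c : F) • wP u v w' +
      (c : F) • (wP u v w' - (c' : F) • wP u v w'')
      = wP u v w - ((c * c' : Fˣ) : F) • wP u v w'' := by
    rw [smul_sub, smul_smul]
    push_cast
    abel
  rwa [e] at h3

lemma wRel_kill {L : Submodule F A} {u v : A} {c : Fˣ} {w : List Bool}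
    (h : wRel L u v c w w) (hc : c ≠ 1) : wP u v w ∈ L := by
  have h1 : (1 : F) - (c : F) ≠ 0 := by
    rw [sub_ne_zero]
    exact fun e => hc (Units.ext e.symm)
  have h2 : ((1 : F) - (c : F)) • wP u v w ∈ L := by
    rw [sub_smul, one_smul]; exact h
  have := L.smul_mem ((1 : F) - (c : F))⁻¹ h2
  rwa [smul_smul, inv_mul_cancel₀ h1, one_smul] at this

lemma wRel_transfer {L : Submodule F A} {u v : A} {c : Fˣ} {w w' : List Bool}
    (h : wRel L u v c w w') (h' : wP u v w' ∈ L) : wP u v w ∈ L := by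
  have := L.add_mem h (L.smul_mem (c : F) h')
  simpa using this

end BraidedAux2
section BraidedAux3

variable {F : Type*} [Field F] {G : Type*} [AddCommGroup G] [DecidableEq G]
  {A : Type*} [Ring A] [Algebra F A]

/-- coefficient accumulated by rotating the letters of `p` one at a time
past the rest of a word of total degree `dtot`. -/
def PhiC (χ : G → G → Fˣ) (g h dtot : G) (p : List Bool) : Fˣ :=
  (p.map fun x => χ (wdg g h x) (dtot - wdg g h x)).prod

omit [DecidableEq G] in
lemma PhiC_nil (χ : G → G → Fˣ) (g h dtot : G) : PhiC χ g h dtot [] = 1 := rfl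

omit [DecidableEq G] in
lemma PhiC_cons (χ : G → G → Fˣ) (g h dtot : G) (x : Bool) (p : List Bool) :
    PhiC χ g h dtot (x :: p)
      = χ (wdg g h x) (dtot - wdg g h x) * PhiC χ g h dtot p := by
  simp [PhiC]

variable {𝒜 : G → Submodule F A} [GradedAlgebra 𝒜] {χ : G → G → Fˣ}
  {L : Submodule F A} {g h : G} {u v : A}

/-- the single rotation step -/
lemma wRel_step
    (hcl : ∀ (g' h' : G), ∀ a ∈ 𝒜 g', ∀ b ∈ 𝒜 h', a ∈ L → b ∈ L →
        b * a - (χ h' g' : F) • (a * b) ∈ L)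
    (hu : u ∈ 𝒜 g) (hv : v ∈ 𝒜 h) {p t : List Bool}
    (hp : wP u v p ∈ L) (ht : wP u v t ∈ L) :
    wRel L u v (χ (wD g h p) (wD g h t)) (p ++ t) (t ++ p) := by
  have := hcl (wD g h t) (wD g h p) (wP u v t) (wP_mem_graded 𝒜 hu hv t)
    (wP u v p) (wP_mem_graded 𝒜 hu hv p) ht hp
  unfold wRel
  rwa [wP_append, wP_append]

/-- letters are in `L` -/
lemma wP_letter (huL : u ∈ L) (hvL : v ∈ L) (x : Bool) : wP u v [x] ∈ L := by
  cases x <;> simpa [wP, wval]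

/-- rotating a prefix `p` past a nonempty suffix `t`, one letter at a time. -/
lemma wRel_multistep
    (hcl : ∀ (g' h' : G), ∀ a ∈ 𝒜 g', ∀ b ∈ 𝒜 h', a ∈ L → b ∈ L →
        b * a - (χ h' g' : F) • (a * b) ∈ L)
    (hu : u ∈ 𝒜 g) (hv : v ∈ 𝒜 h) (huL : u ∈ L) (hvL : v ∈ L) :
    ∀ (p t : List Bool), t ≠ [] →
    (∀ w' : List Bool, w' ≠ [] → w'.length < (p ++ t).length → wP u v w' ∈ L) →
    wRel L u v (PhiC χ g h (wD g h (p ++ t)) p) (p ++ t) (t ++ p) := by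
  intro p
  induction p with
  | nil =>
      intro t _ _
      simpa [PhiC_nil] using wRel_refl L u v t
  | cons x p' ih =>
      intro t ht HT
      have hpt : p' ++ t ≠ [] := by
        intro e
        rcases List.append_eq_nil_iff.mp e with ⟨_, e2⟩
        exact ht e2
      have hlen1 : (p' ++ t).length < ((x :: p') ++ t).length := by
        simp
      have hmem : wP u v (p' ++ t) ∈ L := HT _ hpt hlen1
      have s1 : wRel L u v (χ (wD g h [x]) (wD g h (p' ++ t)))
          ([x] ++ (p' ++ t)) ((p' ++ t) ++ [x]) :=
        wRel_step hcl hu hv (wP_letter huL hvL x) hmem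
      have hlen2 : (p' ++ (t ++ [x])).length = ((x :: p') ++ t).length := by
        simp; omega
      have s2 : wRel L u v (PhiC χ g h (wD g h (p' ++ (t ++ [x]))) p')
          (p' ++ (t ++ [x])) ((t ++ [x]) ++ p') := by
        refine ih (t ++ [x]) (by simp) ?_
        intro w' hw' hlw'
        exact HT w' hw' (by omega)
      -- rewrite the words
      have e1 : ([x] ++ (p' ++ t)) = (x :: p') ++ t := by simp
      have e2 : ((p' ++ t) ++ [x]) = p' ++ (t ++ [x]) := by simp
      have e3 : ((t ++ [x]) ++ p') = t ++ (x :: p') := by simp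
      rw [e1, e2] at s1
      rw [e3] at s2
      have comp := wRel_trans s1 s2
      -- now fix the coefficient
      have ed : wD g h (p' ++ (t ++ [x])) = wD g h ((x :: p') ++ t) := by
        simp only [wD_append, wD_cons, wD_nil]
        abel
      have ed2 : wD g h (p' ++ t) = wD g h ((x :: p') ++ t) - wdg g h x := by
        simp only [wD_append, wD_cons]
        abel
      rw [ed, ed2, wD_singleton] at comp
      rwa [PhiC_cons]

end BraidedAux3
section BraidedAux4

variable {F : Type*} [Field F] {G : Type*} [AddCommGroup G] [DecidableEq G]
  {A : Type*} [Ring A] [Algebra F A]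
  {𝒜 : G → Submodule F A} [GradedAlgebra 𝒜] {χ : G → G → Fˣ}
  {L : Submodule F A} {g h : G} {u v : A}

/-- Loop around a word once: rotate prefix `Al` letterwise, then block `p`, then
suffix `Bl` letterwise.  Gives a self-relation. -/
lemma wRel_loopP
    (hcl : ∀ (g' h' : G), ∀ a ∈ 𝒜 g', ∀ b ∈ 𝒜 h', a ∈ L → b ∈ L →
        b * a - (χ h' g' : F) • (a * b) ∈ L)
    (hu : u ∈ 𝒜 g) (hv : v ∈ 𝒜 h) (huL : u ∈ L) (hvL : v ∈ L)
    (Al p Bl : List Bool) (hpne : p ≠ []) (hABne : Bl ++ Al ≠ [])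
    (hp : wP u v p ∈ L)
    (HT : ∀ w' : List Bool, w' ≠ [] →
      w'.length < (Al ++ (p ++ Bl)).length → wP u v w' ∈ L) :
    wRel L u v
      (PhiC χ g h (wD g h (Al ++ (p ++ Bl))) Al *
        (χ (wD g h p) (wD g h (Al ++ (p ++ Bl)) - wD g h p) *
          PhiC χ g h (wD g h (Al ++ (p ++ Bl))) Bl))
      (Al ++ (p ++ Bl)) (Al ++ (p ++ Bl)) := by
  set dtot := wD g h (Al ++ (p ++ Bl)) with hdtot
  have hBAlen : (Bl ++ Al).length < (Al ++ (p ++ Bl)).length := by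
    simp only [List.length_append]
    have : 0 < p.length := List.length_pos_iff.mpr hpne
    omega
  have hBA : wP u v (Bl ++ Al) ∈ L := HT _ hABne hBAlen
  have R1 : wRel L u v (PhiC χ g h dtot Al) (Al ++ (p ++ Bl)) ((p ++ Bl) ++ Al) := by
    have := wRel_multistep hcl hu hv huL hvL Al (p ++ Bl)
      (by simp [hpne]) HT
    simpa using this
  have R2 : wRel L u v (χ (wD g h p) (wD g h (Bl ++ Al))) (p ++ (Bl ++ Al))
      ((Bl ++ Al) ++ p) := wRel_step hcl hu hv hp hBA
  have R3 : wRel L u v (PhiC χ g h (wD g h (Bl ++ (Al ++ p))) Bl)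
      (Bl ++ (Al ++ p)) ((Al ++ p) ++ Bl) := by
    refine wRel_multistep hcl hu hv huL hvL Bl (Al ++ p) (by simp [hpne]) ?_
    intro w' hw' hlw'
    refine HT w' hw' ?_
    simp only [List.length_append] at hlw' ⊢
    omega
  have e1 : (p ++ Bl) ++ Al = p ++ (Bl ++ Al) := by simp
  have e2 : (Bl ++ Al) ++ p = Bl ++ (Al ++ p) := by simp
  have e3 : (Al ++ p) ++ Bl = Al ++ (p ++ Bl) := by simp
  rw [e1] at R1
  rw [e2] at R2
  rw [e3] at R3
  have ed1 : wD g h (Bl ++ Al) = dtot - wD g h p := by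
    rw [hdtot]
    simp only [wD_append]
    abel
  have ed2 : wD g h (Bl ++ (Al ++ p)) = dtot := by
    rw [hdtot]
    simp only [wD_append]
    abel
  rw [ed1] at R2
  rw [ed2] at R3
  exact wRel_trans R1 (wRel_trans R2 R3)

/-- Loop around a word once, with the two middle letters rotated one at a time. -/
lemma wRel_loopYY
    (hcl : ∀ (g' h' : G), ∀ a ∈ 𝒜 g', ∀ b ∈ 𝒜 h', a ∈ L → b ∈ L →
        b * a - (χ h' g' : F) • (a * b) ∈ L)
    (hu : u ∈ 𝒜 g) (hv : v ∈ 𝒜 h) (huL : u ∈ L) (hvL : v ∈ L)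
    (Al Bl : List Bool) (y : Bool)
    (HT : ∀ w' : List Bool, w' ≠ [] →
      w'.length < (Al ++ ([y] ++ ([y] ++ Bl))).length → wP u v w' ∈ L) :
    wRel L u v
      (PhiC χ g h (wD g h (Al ++ ([y] ++ ([y] ++ Bl)))) Al *
        (χ (wdg g h y) (wD g h (Al ++ ([y] ++ ([y] ++ Bl))) - wdg g h y) *
          (χ (wdg g h y) (wD g h (Al ++ ([y] ++ ([y] ++ Bl))) - wdg g h y) *
            PhiC χ g h (wD g h (Al ++ ([y] ++ ([y] ++ Bl)))) Bl)))
      (Al ++ ([y] ++ ([y] ++ Bl))) (Al ++ ([y] ++ ([y] ++ Bl))) := by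
  set w := Al ++ ([y] ++ ([y] ++ Bl)) with hw
  set dtot := wD g h w with hdtot
  have hn : 2 ≤ w.length := by
    rw [hw]; simp only [List.length_append, List.length_cons, List.length_nil]; omega
  have hT1 : wP u v ([y] ++ (Bl ++ Al)) ∈ L := by
    refine HT _ (by simp) ?_
    rw [hw]; simp only [List.length_append, List.length_cons, List.length_nil]; omega
  have hT2 : wP u v (Bl ++ (Al ++ [y])) ∈ L := by
    refine HT _ (by simp) ?_
    rw [hw]; simp only [List.length_append, List.length_cons, List.length_nil]; omega
  have R1 : wRel L u v (PhiC χ g h dtot Al) (Al ++ ([y] ++ ([y] ++ Bl)))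
      (([y] ++ ([y] ++ Bl)) ++ Al) := by
    exact wRel_multistep hcl hu hv huL hvL Al ([y] ++ ([y] ++ Bl)) (by simp) HT
  have R2 : wRel L u v (χ (wD g h [y]) (wD g h ([y] ++ (Bl ++ Al))))
      ([y] ++ ([y] ++ (Bl ++ Al))) (([y] ++ (Bl ++ Al)) ++ [y]) :=
    wRel_step hcl hu hv (wP_letter huL hvL y) hT1
  have R3 : wRel L u v (χ (wD g h [y]) (wD g h (Bl ++ (Al ++ [y]))))
      ([y] ++ (Bl ++ (Al ++ [y]))) ((Bl ++ (Al ++ [y])) ++ [y]) :=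
    wRel_step hcl hu hv (wP_letter huL hvL y) hT2
  have R4 : wRel L u v (PhiC χ g h (wD g h (Bl ++ (Al ++ ([y] ++ [y])))) Bl)
      (Bl ++ (Al ++ ([y] ++ [y]))) ((Al ++ ([y] ++ [y])) ++ Bl) := by
    refine wRel_multistep hcl hu hv huL hvL Bl (Al ++ ([y] ++ [y])) (by simp) ?_
    intro w' hw' hlw'
    refine HT w' hw' ?_
    rw [hw]
    simp only [List.length_append, List.length_cons, List.length_nil] at hlw' ⊢
    omega
  -- align words
  have e1 : ([y] ++ ([y] ++ Bl)) ++ Al = [y] ++ ([y] ++ (Bl ++ Al)) := by simp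
  have e2 : ([y] ++ (Bl ++ Al)) ++ [y] = [y] ++ (Bl ++ (Al ++ [y])) := by simp
  have e3 : (Bl ++ (Al ++ [y])) ++ [y] = Bl ++ (Al ++ ([y] ++ [y])) := by simp
  have e4 : (Al ++ ([y] ++ [y])) ++ Bl = Al ++ ([y] ++ ([y] ++ Bl)) := by simp
  rw [e1] at R1
  rw [e2] at R2
  rw [e3] at R3
  rw [e4] at R4
  -- align degrees
  have ed1 : wD g h ([y] ++ (Bl ++ Al)) = dtot - wdg g h y := by
    rw [hdtot, hw]; simp only [wD_append, wD_cons, wD_nil]; abel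
  have ed2 : wD g h (Bl ++ (Al ++ [y])) = dtot - wdg g h y := by
    rw [hdtot, hw]; simp only [wD_append, wD_cons, wD_nil]; abel
  have ed3 : wD g h (Bl ++ (Al ++ ([y] ++ [y]))) = dtot := by
    rw [hdtot, hw]; simp only [wD_append, wD_cons, wD_nil]; abel
  rw [ed1, wD_singleton] at R2
  rw [ed2, wD_singleton] at R3
  rw [ed3] at R4
  exact wRel_trans R1 (wRel_trans R2 (wRel_trans R3 R4))

end BraidedAux4
section BraidedAux5

variable {F : Type*} [Field F] {G : Type*} [AddCommGroup G] [DecidableEq G]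
  {A : Type*} [Ring A] [Algebra F A]
  {𝒜 : G → Submodule F A} [GradedAlgebra 𝒜] {χ : G → G → Fˣ}
  {L : Submodule F A} {g h : G} {u v : A}

/-- A word with two adjacent equal letters, of length ≥ 3, lies in `L`
(provided all shorter nonempty words do). -/
lemma pair_case
    (hχ1 : ∀ g' h' k : G, χ (g' + h') k = χ g' k * χ h' k)
    (hχ2 : ∀ g' h' k : G, χ g' (h' + k) = χ g' h' * χ g' k)
    (hcl : ∀ (g' h' : G), ∀ a ∈ 𝒜 g', ∀ b ∈ 𝒜 h', a ∈ L → b ∈ L →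
        b * a - (χ h' g' : F) • (a * b) ∈ L)
    (hu : u ∈ 𝒜 g) (hv : v ∈ 𝒜 h) (huL : u ∈ L) (hvL : v ∈ L)
    (hu2 : ((χ g g : F)) ^ 2 = 1 → u * u = 0)
    (hv2 : ((χ h h : F)) ^ 2 = 1 → v * v = 0)
    (Al Bl : List Bool) (y : Bool)
    (hn : 3 ≤ (Al ++ ([y] ++ ([y] ++ Bl))).length)
    (HT : ∀ w' : List Bool, w' ≠ [] →
      w'.length < (Al ++ ([y] ++ ([y] ++ Bl))).length → wP u v w' ∈ L) :
    wP u v (Al ++ ([y] ++ ([y] ++ Bl))) ∈ L := by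
  set w := Al ++ ([y] ++ ([y] ++ Bl)) with hw
  set dtot := wD g h w with hdtot
  set dy := wdg g h y with hdy
  set cy := χ dy (dtot - dy) with hcy
  -- first loop
  have l1 : wRel L u v
      (PhiC χ g h dtot Al * (cy * (cy * PhiC χ g h dtot Bl))) w w :=
    wRel_loopYY hcl hu hv huL hvL Al Bl y HT
  -- second loop, with the two equal letters merged into one block
  have e22 : [y] ++ ([y] ++ Bl) = ([y] ++ [y]) ++ Bl := by simp
  have hlw : w.length = Al.length + (1 + (1 + Bl.length)) := by
    rw [hw]
    simp only [List.length_append, List.length_cons, List.length_nil]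
  have hyy : wP u v ([y] ++ [y]) ∈ L := by
    refine HT _ (by simp) ?_
    have h2 : ([y] ++ [y]).length = 2 := rfl
    omega
  have hBAne : Bl ++ Al ≠ [] := by
    intro e
    have hL0 : (Bl ++ Al).length = 0 := by rw [e]; rfl
    simp only [List.length_append] at hL0
    omega
  have l2' := wRel_loopP hcl hu hv huL hvL Al ([y] ++ [y]) Bl (by simp) hBAne hyy
    (by
      intro w' hw' hlw'
      refine HT w' hw' ?_
      rw [hw]
      simpa using hlw')
  rw [show Al ++ (([y] ++ [y]) ++ Bl) = w by rw [hw]; simp] at l2'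
  have edyy : wD g h ([y] ++ [y]) = dy + dy := by
    simp only [wD_append, wD_cons, wD_nil, hdy]
    abel
  rw [edyy] at l2'
  set cp := χ (dy + dy) (dtot - (dy + dy)) with hcp
  -- if either loop coefficient is ≠ 1, kill
  by_cases k1 : PhiC χ g h dtot Al * (cy * (cy * PhiC χ g h dtot Bl)) = 1
  swap
  · exact wRel_kill l1 k1
  by_cases k2 : PhiC χ g h dtot Al * (cp * PhiC χ g h dtot Bl) = 1
  swap
  · exact wRel_kill l2' k2
  -- both are 1 : deduce (χ dy dy)^2 = 1
  have hcc : cy * cy = cp := by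
    have e := k1.trans k2.symm
    have e2 := mul_left_cancel e
    rw [← mul_assoc] at e2
    exact mul_right_cancel e2
  have key1 : χ dy dtot = cy * χ dy dy := by
    have := hχ2 dy (dtot - dy) dy
    rwa [sub_add_cancel] at this
  have key2 : χ (dy + dy) dtot = cp * χ (dy + dy) (dy + dy) := by
    have := hχ2 (dy + dy) (dtot - (dy + dy)) (dy + dy)
    rwa [sub_add_cancel] at this
  have key3 : χ (dy + dy) dtot = χ dy dtot * χ dy dtot := hχ1 dy dy dtot
  have key4 : χ (dy + dy) (dy + dy)
      = (χ dy dy * χ dy dy) * (χ dy dy * χ dy dy) := by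
    rw [hχ1 dy dy (dy + dy), hχ2 dy dy dy]
  have hsq : χ dy dy * χ dy dy = 1 := by
    have E : (cy * χ dy dy) * (cy * χ dy dy)
        = (cy * cy) * ((χ dy dy * χ dy dy) * (χ dy dy * χ dy dy)) := by
      rw [← key1, ← key3, key2, key4, hcc]
    have E2 := (mul_mul_mul_comm cy (χ dy dy) cy (χ dy dy)).symm.trans E
    have E3 := mul_left_cancel E2
    exact left_eq_mul.mp E3
  -- so the square of the letter is zero
  have hzero : wval u v y * wval u v y = 0 := by
    cases y
    · apply hu2
      have : ((χ dy dy : Fˣ) : F) * ((χ dy dy : Fˣ) : F) = 1 := by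
        rw [← Units.val_mul, hsq, Units.val_one]
      rw [hdy] at this
      simp only [wdg, Bool.cond_false] at this
      rw [sq]; exact this
    · apply hv2
      have : ((χ dy dy : Fˣ) : F) * ((χ dy dy : Fˣ) : F) = 1 := by
        rw [← Units.val_mul, hsq, Units.val_one]
      rw [hdy] at this
      simp only [wdg, Bool.cond_true] at this
      rw [sq]; exact this
  have : wP u v w = 0 := by
    rw [hw, wP_append, wP_append, wP_append]
    have : wP u v [y] = wval u v y := by simp [wP]
    rw [this, ← mul_assoc (wval u v y), hzero, zero_mul, mul_zero]
  rw [this]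
  exact L.zero_mem

end BraidedAux5
section BraidedAux6

variable {F : Type*} [Field F] {G : Type*} [AddCommGroup G] [DecidableEq G]
  {A : Type*} [Ring A] [Algebra F A]

/-- the alternating word `x (!x) x (!x) …` of length `2m`. -/
def rep2 (x : Bool) : ℕ → List Bool
  | 0 => []
  | m + 1 => x :: ((!x) :: rep2 x m)

lemma rep2_succ (x : Bool) (m : ℕ) : rep2 x (m + 1) = [x, !x] ++ rep2 x m := rfl

lemma rep2_add (x : Bool) (m k : ℕ) :
    rep2 x (m + k) = rep2 x m ++ rep2 x k := by
  induction m with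
  | zero => simp [rep2]
  | succ m ihm =>
      have : m + 1 + k = (m + k) + 1 := by omega
      rw [this, rep2_succ, rep2_succ, ihm]
      simp

lemma rep2_length (x : Bool) (m : ℕ) : (rep2 x m).length = 2 * m := by
  induction m with
  | zero => rfl
  | succ m ihm => rw [rep2_succ]; simp [ihm]; omega

lemma rep2_ne_nil (x : Bool) (m : ℕ) : rep2 x (m + 1) ≠ [] := by
  rw [rep2_succ]; simp

lemma wD_rep2 (g h : G) (x : Bool) (m : ℕ) :
    wD g h (rep2 x m) = m • (g + h) := by
  induction m with
  | zero => simp [rep2, wD_nil]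
  | succ m ihm =>
      rw [rep2_succ, wD_append, ihm, succ_nsmul]
      have : wD g h [x, !x] = g + h := by
        cases x <;> simp [wD, wdg] <;> abel
      rw [this]
      abel

variable {χ : G → G → Fˣ}

lemma chi_zero_right (hχ2 : ∀ g' h' k : G, χ g' (h' + k) = χ g' h' * χ g' k)
    (e : G) : χ e 0 = 1 := by
  have := hχ2 e 0 0
  rw [add_zero] at this
  exact (left_eq_mul.mp this)

lemma chi_nsmul_right (hχ2 : ∀ g' h' k : G, χ g' (h' + k) = χ g' h' * χ g' k)
    (e f : G) (m : ℕ) : χ e (m • f) = χ e f ^ m := by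
  induction m with
  | zero => simpa [zero_nsmul] using chi_zero_right hχ2 e
  | succ m ihm =>
      rw [succ_nsmul, hχ2, ihm, pow_succ]

end BraidedAux6
section BraidedAux7

variable {F : Type*} [Field F] {G : Type*} [AddCommGroup G] [DecidableEq G]
  {A : Type*} [Ring A] [Algebra F A]
  {𝒜 : G → Submodule F A} [GradedAlgebra 𝒜] {χ : G → G → Fˣ}
  {L : Submodule F A} {g h : G} {u v : A}

/-- even alternating words `(x (!x))^{m+2}` are in `L`. -/
lemma alt_even
    (hχ1 : ∀ g' h' k : G, χ (g' + h') k = χ g' k * χ h' k)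
    (hχ2 : ∀ g' h' k : G, χ g' (h' + k) = χ g' h' * χ g' k)
    (hcl : ∀ (g' h' : G), ∀ a ∈ 𝒜 g', ∀ b ∈ 𝒜 h', a ∈ L → b ∈ L →
        b * a - (χ h' g' : F) • (a * b) ∈ L)
    (hu : u ∈ 𝒜 g) (hv : v ∈ 𝒜 h) (huL : u ∈ L) (hvL : v ∈ L)
    (hq : ((χ (g + h) (g + h) : F)) ^ 2 ≠ 1)
    (x : Bool) (m : ℕ)
    (HT : ∀ w' : List Bool, w' ≠ [] →
      w'.length < (rep2 x (m + 2)).length → wP u v w' ∈ L) :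
    wP u v (rep2 x (m + 2)) ∈ L := by
  set q : Fˣ := χ (g + h) (g + h) with hqdef
  have hq2 : q ^ 2 ≠ 1 := by
    intro e
    apply hq
    rw [← Units.val_pow_eq_pow_val, e, Units.val_one]
  have hlen : (rep2 x (m + 2)).length = 2 * (m + 2) := rep2_length x (m + 2)
  -- first self-rotation, by the block [x, !x]
  have hp1 : wP u v (rep2 x 1) ∈ L := by
    refine HT _ (rep2_ne_nil x 0) ?_
    rw [rep2_length, hlen]; omega
  have ht1 : wP u v (rep2 x (m + 1)) ∈ L := by
    refine HT _ (rep2_ne_nil x m) ?_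
    rw [rep2_length, hlen]; omega
  have s1 : wRel L u v (χ (wD g h (rep2 x 1)) (wD g h (rep2 x (m + 1))))
      (rep2 x 1 ++ rep2 x (m + 1)) (rep2 x (m + 1) ++ rep2 x 1) :=
    wRel_step hcl hu hv hp1 ht1
  rw [← rep2_add, ← rep2_add] at s1
  have e1 : (1 : ℕ) + (m + 1) = m + 2 := by omega
  have e2 : (m + 1) + 1 = m + 2 := by omega
  rw [e1, e2] at s1
  have ec1 : χ (wD g h (rep2 x 1)) (wD g h (rep2 x (m + 1))) = q ^ (m + 1) := by
    rw [wD_rep2, wD_rep2, one_nsmul, chi_nsmul_right hχ2]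
  rw [ec1] at s1
  by_cases k1 : q ^ (m + 1) = 1
  swap
  · exact wRel_kill s1 k1
  -- the first coefficient is 1
  rcases m with _ | m'
  · -- m = 0 : q = 1, contradicting q² ≠ 1
    exfalso
    apply hq2
    rw [pow_one] at k1
    rw [k1, one_pow]
  -- m = m' + 1 : second self-rotation, by the block [x,!x,x,!x]
  have hp2 : wP u v (rep2 x 2) ∈ L := by
    refine HT _ (rep2_ne_nil x 1) ?_
    rw [rep2_length, hlen]; omega
  have ht2 : wP u v (rep2 x (m' + 1)) ∈ L := by
    refine HT _ (rep2_ne_nil x m') ?_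
    rw [rep2_length, hlen]; omega
  have s2 : wRel L u v (χ (wD g h (rep2 x 2)) (wD g h (rep2 x (m' + 1))))
      (rep2 x 2 ++ rep2 x (m' + 1)) (rep2 x (m' + 1) ++ rep2 x 2) :=
    wRel_step hcl hu hv hp2 ht2
  rw [← rep2_add, ← rep2_add] at s2
  have e3 : (2 : ℕ) + (m' + 1) = m' + 1 + 2 := by omega
  rw [e3] at s2
  have ec2 : χ (wD g h (rep2 x 2)) (wD g h (rep2 x (m' + 1)))
      = q ^ (m' + 1) * q ^ (m' + 1) := by
    rw [wD_rep2, wD_rep2]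
    have : (2 : ℕ) • (g + h) = (g + h) + (g + h) := two_nsmul (g + h)
    rw [this, hχ1, chi_nsmul_right hχ2]
  rw [ec2] at s2
  by_cases k2 : q ^ (m' + 1) * q ^ (m' + 1) = 1
  swap
  · exact wRel_kill s2 k2
  -- both coefficients are 1 : derive q² = 1, contradiction
  exfalso
  apply hq2
  have hA : q ^ (2 * m' + 4) = 1 := by
    have : 2 * m' + 4 = (m' + 1 + 1) + (m' + 1 + 1) := by omega
    rw [this, pow_add]
    rw [show m' + 1 + 1 = m' + 2 from rfl] at *
    rw [k1, one_mul]
  have hB : q ^ (2 * m' + 2) = 1 := by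
    have : 2 * m' + 2 = (m' + 1) + (m' + 1) := by omega
    rw [this, pow_add, k2]
  have : 2 * m' + 4 = (2 * m' + 2) + 2 := by omega
  rw [this, pow_add, hB, one_mul] at hA
  exact hA

/-- odd alternating words `x ((!x) x)^{m+1}` are in `L`. -/
lemma alt_odd
    (hχ1 : ∀ g' h' k : G, χ (g' + h') k = χ g' k * χ h' k)
    (hχ2 : ∀ g' h' k : G, χ g' (h' + k) = χ g' h' * χ g' k)
    (hcl : ∀ (g' h' : G), ∀ a ∈ 𝒜 g', ∀ b ∈ 𝒜 h', a ∈ L → b ∈ L →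
        b * a - (χ h' g' : F) • (a * b) ∈ L)
    (hu : u ∈ 𝒜 g) (hv : v ∈ 𝒜 h) (huL : u ∈ L) (hvL : v ∈ L)
    (hu2 : ((χ g g : F)) ^ 2 = 1 → u * u = 0)
    (hv2 : ((χ h h : F)) ^ 2 = 1 → v * v = 0)
    (x : Bool) (m : ℕ)
    (HT : ∀ w' : List Bool, w' ≠ [] →
      w'.length < (x :: rep2 (!x) (m + 1)).length → wP u v w' ∈ L) :
    wP u v (x :: rep2 (!x) (m + 1)) ∈ L := by
  have hlen : (x :: rep2 (!x) (m + 1)).length = 2 * m + 3 := by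
    simp [rep2_length]; omega
  have hJ : wP u v (rep2 (!x) (m + 1)) ∈ L := by
    refine HT _ (rep2_ne_nil (!x) m) ?_
    rw [rep2_length, hlen]; omega
  have s : wRel L u v (χ (wD g h [x]) (wD g h (rep2 (!x) (m + 1))))
      ([x] ++ rep2 (!x) (m + 1)) (rep2 (!x) (m + 1) ++ [x]) :=
    wRel_step hcl hu hv (wP_letter huL hvL x) hJ
  have ew : [x] ++ rep2 (!x) (m + 1) = x :: rep2 (!x) (m + 1) := by simp
  rw [ew] at s
  refine wRel_transfer s ?_
  -- the rotated word has two adjacent x's : use pair_case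
  have ew2 : rep2 (!x) (m + 1) ++ [x]
      = (rep2 (!x) m ++ [!x]) ++ ([x] ++ ([x] ++ [])) := by
    have : (m : ℕ) + 1 = m + 1 := rfl
    rw [show m + 1 = m + 1 from rfl, rep2_add (!x) m 1]
    have : rep2 (!x) 1 = [!x, !!x] := rfl
    rw [this, Bool.not_not]
    simp
  rw [ew2]
  refine pair_case hχ1 hχ2 hcl hu hv huL hvL hu2 hv2 _ _ _ ?_ ?_
  · have : ((rep2 (!x) m ++ [!x]) ++ ([x] ++ ([x] ++ []))).length = 2 * m + 3 := by
      simp [rep2_length]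
    omega
  · intro w' hw' hlw'
    refine HT w' hw' ?_
    have : ((rep2 (!x) m ++ [!x]) ++ ([x] ++ ([x] ++ []))).length = 2 * m + 3 := by
      simp [rep2_length]
    omega

end BraidedAux7
section BraidedAux8

/-- Every word of length ≥ 2 either has two adjacent equal letters, or is
even alternating, or is odd alternating. -/
lemma word_struct : ∀ w : List Bool, 2 ≤ w.length →
    (∃ Al y Bl, w = Al ++ ([y] ++ ([y] ++ Bl))) ∨
    (∃ x m, w = rep2 x (m + 1)) ∨
    (∃ x m, w = x :: rep2 (!x) (m + 1)) := by
  intro w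
  induction w with
  | nil => intro hw; simp at hw
  | cons x rest ih =>
      intro hw
      match rest, hw with
      | [y], _ =>
          by_cases hxy : x = y
          · subst hxy
            exact Or.inl ⟨[], x, [], by simp⟩
          · have hy : y = !x := by
              cases x <;> cases y <;> simp_all
            subst hy
            exact Or.inr (Or.inl ⟨x, 0, rfl⟩)
      | y :: z :: t, _ =>
          by_cases hxy : x = y
          · subst hxy
            exact Or.inl ⟨[], x, z :: t, by simp⟩
          · have hy : y = !x := by
              cases x <;> cases y <;> simp_all
            subst hy
            rcases ih (by simp) with hpair | heven | hodd
            · rcases hpair with ⟨Al, y', Bl, hAB⟩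
              exact Or.inl ⟨x :: Al, y', Bl, by rw [hAB]; simp⟩
            · rcases heven with ⟨x', m, he⟩
              -- rest = rep2 x' (m+1) = x' :: !x' :: …, and head of rest is !x
              have hx' : x' = !x := by
                have : (rep2 x' (m + 1)).head? = some x' := rfl
                rw [← he] at this
                simpa using this.symm
              subst hx'
              -- w = x :: !x :: … odd alternating
              exact Or.inr (Or.inr ⟨x, m, by rw [he]⟩)
            · rcases hodd with ⟨x', m, ho⟩
              have hx' : x' = !x := by
                have : (x' :: rep2 (!x') (m + 1)).head? = some x' := rfl
                rw [← ho] at this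
                simpa using this.symm
              subst hx'
              -- w = x :: !x :: rep2 (!!x) (m+1) = rep2 x (m+2)
              have : rep2 (!(!x)) (m + 1) = rep2 x (m + 1) := by
                rw [Bool.not_not]
              refine Or.inr (Or.inl ⟨x, m + 1, ?_⟩)
              rw [ho, this]
              rfl

end BraidedAux8
section BraidedMain

variable {F : Type*} [Field F] {G : Type*} [AddCommGroup G] [DecidableEq G]
  {A : Type*} [Ring A] [Algebra F A]
  {𝒜 : G → Submodule F A} [GradedAlgebra 𝒜] {χ : G → G → Fˣ}
  {L : Submodule F A} {g h : G} {u v : A}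

/-- every nonempty word in `u`, `v` lies in `L`. -/
lemma all_words
    (hχ1 : ∀ g' h' k : G, χ (g' + h') k = χ g' k * χ h' k)
    (hχ2 : ∀ g' h' k : G, χ g' (h' + k) = χ g' h' * χ g' k)
    (hcl : ∀ (g' h' : G), ∀ a ∈ 𝒜 g', ∀ b ∈ 𝒜 h', a ∈ L → b ∈ L →
        b * a - (χ h' g' : F) • (a * b) ∈ L)
    (hu : u ∈ 𝒜 g) (hv : v ∈ 𝒜 h) (huL : u ∈ L) (hvL : v ∈ L)
    (hq : ((χ (g + h) (g + h) : F)) ^ 2 ≠ 1)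
    (huv : u * v ∈ L)
    (hu2 : ((χ g g : F)) ^ 2 = 1 → u * u = 0)
    (hv2 : ((χ h h : F)) ^ 2 = 1 → v * v = 0) :
    ∀ (n : ℕ) (w : List Bool), w ≠ [] → w.length = n → wP u v w ∈ L := by
  intro n
  induction n using Nat.strong_induction_on with
  | _ n ih =>
  intro w hw hlen
  subst hlen
  have HT : ∀ w' : List Bool, w' ≠ [] → w'.length < w.length → wP u v w' ∈ L :=
    fun w' h1 h2 => ih _ h2 w' h1 rfl
  clear ih
  rcases w with _ | ⟨x1, _ | ⟨x2, rest⟩⟩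
  · exact absurd rfl hw
  · -- single letter
    exact wP_letter huL hvL x1
  rcases rest with _ | ⟨x3, t⟩
  · -- two letters
    have huv' : wP u v [false, true] ∈ L := by
      have e : wP u v [false, true] = u * v := by simp [wP, wval]
      rw [e]; exact huv
    cases x1 <;> cases x2
    · -- [u, u]
      by_cases hr : ((χ g g : F)) ^ 2 = 1
      · have h0 := hu2 hr
        have e : wP u v [false, false] = 0 := by
          simp [wP, wval]
          exact h0
        rw [e]; exact L.zero_mem
      · have s := wRel_step (p := [false]) (t := [false]) hcl hu hv
          (wP_letter huL hvL false) (wP_letter huL hvL false)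
        have ed : wD g h [false] = g := by simp [wD, wdg]
        rw [ed] at s
        refine wRel_kill s ?_
        intro e
        exact hr (by rw [e, Units.val_one, one_pow])
    · exact huv'
    · -- [v, u]
      have s := wRel_step (p := [true]) (t := [false]) hcl hu hv
        (wP_letter huL hvL true) (wP_letter huL hvL false)
      exact wRel_transfer s huv'
    · -- [v, v]
      by_cases hr : ((χ h h : F)) ^ 2 = 1
      · have h0 := hv2 hr
        have e : wP u v [true, true] = 0 := by
          simp [wP, wval]
          exact h0
        rw [e]; exact L.zero_mem
      · have s := wRel_step (p := [true]) (t := [true]) hcl hu hv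
          (wP_letter huL hvL true) (wP_letter huL hvL true)
        have ed : wD g h [true] = h := by simp [wD, wdg]
        rw [ed] at s
        refine wRel_kill s ?_
        intro e
        exact hr (by rw [e, Units.val_one, one_pow])
  · -- length ≥ 3
    have hlen3 : 3 ≤ (x1 :: x2 :: x3 :: t).length := by simp
    rcases word_struct (x1 :: x2 :: x3 :: t) (by omega) with hpair | heven | hodd
    · rcases hpair with ⟨Al, y, Bl, he⟩
      rw [he]
      refine pair_case hχ1 hχ2 hcl hu hv huL hvL hu2 hv2 Al Bl y ?_ ?_
      · rw [← he]; exact hlen3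
      · intro w' h1 h2
        refine HT w' h1 ?_
        rw [he]; exact h2
    · rcases heven with ⟨x, m, he⟩
      rcases m with _ | m'
      · exfalso
        have : (x1 :: x2 :: x3 :: t).length = 2 := by rw [he, rep2_length]
        omega
      · rw [he]
        have : m' + 1 + 1 = m' + 2 := rfl
        rw [this]
        refine alt_even hχ1 hχ2 hcl hu hv huL hvL hq x m' ?_
        intro w' h1 h2
        refine HT w' h1 ?_
        rw [he]
        rw [show m' + 2 = m' + 1 + 1 from rfl] at h2
        exact h2
    · rcases hodd with ⟨x, m, ho⟩
      rw [ho]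
      refine alt_odd hχ1 hχ2 hcl hu hv huL hvL hu2 hv2 x m ?_
      intro w' h1 h2
      refine HT w' h1 ?_
      rw [ho]; exact h2

lemma wP_replicate_false (u v : A) (k : ℕ) :
    wP u v (List.replicate k false) = u ^ k := by
  induction k with
  | zero => simp [wP]
  | succ k ihk =>
      rw [List.replicate_succ, wP_cons, ihk, pow_succ]
      simp [wval]
      exact (pow_mul_comm' _ _).symm

lemma wP_replicate_true (u v : A) (k : ℕ) :
    wP u v (List.replicate k true) = v ^ k := by
  induction k with
  | zero => simp [wP]
  | succ k ihk =>
      rw [List.replicate_succ, wP_cons, ihk, pow_succ]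
      simp [wval]
      exact (pow_mul_comm' _ _).symm

lemma wP_flatten (u v : A) (ll : List (List Bool)) :
    wP u v ll.flatten = (ll.map (wP u v)).prod := by
  induction ll with
  | nil => simp [wP]
  | cons l ll ihl =>
      rw [List.flatten_cons, wP_append, ihl, List.map_cons, List.prod_cons]

end BraidedMain
theorem stmt_12 (F : Type*) [Field F] [CharZero F]
    (G : Type*) [AddCommGroup G] [DecidableEq G]
    (A : Type*) [Ring A] [Algebra F A]
    (𝒜 : G → Submodule F A) [GradedAlgebra 𝒜]
    (χ : G → G → Fˣ)
    (hχ1 : ∀ g h k : G, χ (g + h) k = χ g k * χ h k)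
    (hχ2 : ∀ g h k : G, χ g (h + k) = χ g h * χ g k)
    (L : Submodule F A) (hL : IsBracketClosed G 𝒜 χ L)
    (g h : G) (u v : A) (hu : u ∈ 𝒜 g) (hv : v ∈ 𝒜 h)
    (huL : u ∈ L) (hvL : v ∈ L)
    (hq : ((χ (g + h) (g + h) : F)) ^ 2 ≠ 1)
    (huv : u * v ∈ L) (huvu : u * v * u ∈ L) (hvuv : v * u * v ∈ L)
    (hu2 : ((χ g g : F)) ^ 2 = 1 → u * u = 0)
    (hv2 : ((χ h h : F)) ^ 2 = 1 → v * v = 0) :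
    ∀ m : ℕ, 0 < m → ∀ a b : Fin m → ℕ,
      (List.ofFn fun i => u ^ a i * v ^ b i).prod ∈
        L ⊔ Submodule.span F {(1 : A)} := by
  intro m _ a b
  have key : ∀ w : List Bool, w ≠ [] → wP u v w ∈ L :=
    fun w hw => all_words hχ1 hχ2 hL.2 hu hv huL hvL hq huv hu2 hv2 w.length w hw rfl
  set ll : List (List Bool) :=
    List.ofFn fun i => List.replicate (a i) false ++ List.replicate (b i) true
    with hll
  have hps : (List.ofFn fun i => u ^ a i * v ^ b i).prod = wP u v ll.flatten := by
    rw [wP_flatten, hll, List.map_ofFn]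
    have ef : (fun i => u ^ a i * v ^ b i)
        = (wP u v ∘ fun i : Fin m =>
            List.replicate (a i) false ++ List.replicate (b i) true) := by
      funext i
      simp only [Function.comp_apply]
      rw [wP_append, wP_replicate_false, wP_replicate_true]
    rw [ef]
  rw [hps]
  by_cases hfl : ll.flatten = []
  · rw [hfl, wP_nil]
    exact Submodule.mem_sup_right (Submodule.mem_span_singleton_self 1)
  · exact Submodule.mem_sup_left (key ll.flatten hfl)
end

section
/- Suppose A is generated as an F-algebra by homogeneous elements x_1, …, x_n, write q_{ij} := p_{x_i x_j}, and let L be the smallest bracket-closed subspace of A containing x_1, …, x_n. If q_{ii} ≠ 1 for all 1 ≤ i ≤ n, if x_i² = 0 for every i with q_{ii}² = 1, and if q_{ij}·q_{ji} ≠ 1 for all i ≠ j (the generalized Dynkin diagram is complete), then A = F·1 + L. (This is the 'complete diagram implies 𝔅(V) = F ⊕ 𝔏(V)' direction of the theorem, with the Nichols-algebra relation x_i² = 0 for q_{ii} = −1 taken as a hypothesis.) -/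
open scoped Pointwise in
theorem stmt_13 (F : Type*) [Field F] [CharZero F]
    (G : Type*) [AddCommGroup G] [DecidableEq G]
    (A : Type*) [Ring A] [Algebra F A]
    (𝒜 : G → Submodule F A) [GradedAlgebra 𝒜]
    (χ : G → G → Fˣ)
    (hχ1 : ∀ g h k : G, χ (g + h) k = χ g k * χ h k)
    (hχ2 : ∀ g h k : G, χ g (h + k) = χ g h * χ g k)
    (n : ℕ) (d : Fin n → G) (x : Fin n → A)
    (hx : ∀ i, x i ∈ 𝒜 (d i))
    (hgen : Algebra.adjoin F (Set.range x) = ⊤)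
    (L : Submodule F A) (hL : IsBracketClosed G 𝒜 χ L)
    (hxL : ∀ i, x i ∈ L)
    (hmin : ∀ L' : Submodule F A, IsBracketClosed G 𝒜 χ L' →
      (∀ i, x i ∈ L') → L ≤ L')
    (hqii : ∀ i, (χ (d i) (d i) : F) ≠ 1)
    (hsq : ∀ i, ((χ (d i) (d i) : F)) ^ 2 = 1 → x i * x i = 0)
    (hcomplete : ∀ i j, i ≠ j →
      (χ (d i) (d j) : F) * (χ (d j) (d i) : F) ≠ 1) :
    L ⊔ Submodule.span F {(1 : A)} = ⊤ := by
  obtain ⟨-, hbr⟩ := hL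
  -- cancel a nonzero scalar
  have hcancel : ∀ (c : F) (u : A), c ≠ 0 → c • u ∈ L → u ∈ L := by
    intro c u hc h
    have h2 := L.smul_mem c⁻¹ h
    rwa [smul_smul, inv_mul_cancel₀ hc, one_smul] at h2
  -- products of pairs of generators are in L
  have hpair : ∀ i j : Fin n, x i * x j ∈ L := by
    intro i j
    by_cases hij : i = j
    · subst hij
      have h1 := hbr (d i) (d i) (x i) (hx i) (x i) (hx i) (hxL i) (hxL i)
      have h2 : (1 - (χ (d i) (d i) : F)) • (x i * x i) ∈ L := by
        rw [sub_smul, one_smul]; exact h1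
      exact hcancel _ _ (sub_ne_zero.mpr (Ne.symm (hqii i))) h2
    · have B1 := hbr (d i) (d j) (x i) (hx i) (x j) (hx j) (hxL i) (hxL j)
      have B2 := hbr (d j) (d i) (x j) (hx j) (x i) (hx i) (hxL j) (hxL i)
      have h2 : (1 - (χ (d i) (d j) : F) * (χ (d j) (d i) : F)) • (x i * x j) ∈ L := by
        have h3 := L.add_mem B2 (L.smul_mem ((χ (d i) (d j) : F)) B1)
        convert h3 using 1
        module
      exact hcancel _ _ (sub_ne_zero.mpr (Ne.symm (hcomplete i j hij))) h2
  -- homogeneity of monomials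
  have hPmem : ∀ l : List (Fin n), (l.map x).prod ∈ 𝒜 ((l.map d).sum) := by
    intro l
    induction l with
    | nil => simpa using SetLike.one_mem_graded 𝒜
    | cons i t ih => simpa using SetLike.mul_mem_graded (hx i) ih
  -- every nonempty monomial lies in L
  have key : ∀ m : ℕ, ∀ l : List (Fin n), l.length ≤ m → l ≠ [] → (l.map x).prod ∈ L := by
    intro m
    induction m with
    | zero =>
      intro l hl hne
      exact absurd (List.length_eq_zero_iff.mp (Nat.le_zero.mp hl)) hne
    | succ m ih =>
      rintro (_ | ⟨i, _ | ⟨j, w⟩⟩) hl hne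
      · exact absurd rfl hne
      · simpa using hxL i
      · rcases eq_or_ne w [] with hw | hw
        · subst hw; simpa using hpair i j
        · -- main case : l = i :: j :: w with w ≠ []
          have hlen : w.length + 2 ≤ m + 1 := by simpa using hl
          have hPw : (w.map x).prod ∈ 𝒜 ((w.map d).sum) := hPmem w
          have hPwL : (w.map x).prod ∈ L := ih w (by omega) hw
          have hv1L : x j * (w.map x).prod ∈ L := by
            have h := ih (j :: w) (by simp; omega) (List.cons_ne_nil _ _)
            simpa using h
          have hv1mem : x j * (w.map x).prod ∈ 𝒜 (d j + (w.map d).sum) :=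
            SetLike.mul_mem_graded (hx j) hPw
          have hv2L : (w.map x).prod * x i ∈ L := by
            have h := ih (w ++ [i]) (by simp; omega) (by simp)
            simpa using h
          have hv2mem : (w.map x).prod * x i ∈ 𝒜 ((w.map d).sum + d i) :=
            SetLike.mul_mem_graded hPw (hx i)
          by_cases hq : i = j ∧ ((χ (d i) (d i) : F)) ^ 2 = 1
          · have h0 : x i * x i = 0 := hsq i hq.2
            obtain ⟨rfl, -⟩ := hq
            simp only [List.map_cons, List.prod_cons, ← mul_assoc, h0, zero_mul]
            exact L.zero_mem
          · have hpt : (χ (d i) (d j) : F) * ((χ (d j) (d i) : F)) ≠ 1 := by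
              by_cases hij : i = j
              · subst hij
                intro hcon
                exact hq ⟨rfl, by rw [sq]; exact hcon⟩
              · exact hcomplete i j hij
            have R1 := hbr (d j + (w.map d).sum) (d i) (x j * (w.map x).prod) hv1mem
              (x i) (hx i) hv1L (hxL i)
            have R2 := hbr ((w.map d).sum + d i) (d j) ((w.map x).prod * x i) hv2mem
              (x j) (hx j) hv2L (hxL j)
            have R3 := hbr ((w.map d).sum) (d i + d j) ((w.map x).prod) hPw
              (x i * x j) (SetLike.mul_mem_graded (hx i) (hx j)) hPwL (hpair i j)
            simp only [← mul_assoc] at R1 R2 R3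
            -- now:
            -- R1 : x i * x j * Pw - c1 • (x j * Pw * x i) ∈ L
            -- R2 : x j * Pw * x i - c2 • (Pw * x i * x j) ∈ L
            -- R3 : x i * x j * Pw - c3 • (Pw * x i * x j) ∈ L
            have E2 : ((χ (d i + d j) ((w.map d).sum) : F)
                - (χ (d i) (d j + (w.map d).sum) : F) * (χ (d j) ((w.map d).sum + d i) : F))
                • ((w.map x).prod * x i * x j) ∈ L := by
              have h3 := L.sub_mem (L.add_mem R1
                (L.smul_mem ((χ (d i) (d j + (w.map d).sum) : F)) R2)) R3
              convert h3 using 1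
              module
            have hc1 : (χ (d i) (d j + (w.map d).sum) : F)
                = (χ (d i) (d j) : F) * (χ (d i) ((w.map d).sum) : F) := by
              rw [hχ2, Units.val_mul]
            have hc2 : (χ (d j) ((w.map d).sum + d i) : F)
                = (χ (d j) ((w.map d).sum) : F) * (χ (d j) (d i) : F) := by
              rw [hχ2, Units.val_mul]
            have hc3 : (χ (d i + d j) ((w.map d).sum) : F)
                = (χ (d i) ((w.map d).sum) : F) * (χ (d j) ((w.map d).sum) : F) := by
              rw [hχ1, Units.val_mul]
            have hne : ((χ (d i + d j) ((w.map d).sum) : F)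
                - (χ (d i) (d j + (w.map d).sum) : F) * (χ (d j) ((w.map d).sum + d i) : F)) ≠ 0 := by
              rw [hc1, hc2, hc3]
              have e : (χ (d i) ((w.map d).sum) : F) * (χ (d j) ((w.map d).sum) : F)
                  - (χ (d i) (d j) : F) * (χ (d i) ((w.map d).sum) : F)
                    * ((χ (d j) ((w.map d).sum) : F) * (χ (d j) (d i) : F))
                  = (χ (d i) ((w.map d).sum) : F) * (χ (d j) ((w.map d).sum) : F)
                    * (1 - (χ (d i) (d j) : F) * (χ (d j) (d i) : F)) := by ring
              rw [e]
              exact mul_ne_zero (mul_ne_zero (Units.ne_zero _) (Units.ne_zero _))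
                (sub_ne_zero.mpr (Ne.symm hpt))
            have hW2 : (w.map x).prod * x i * x j ∈ L := hcancel _ _ hne E2
            have hM : x i * x j * (w.map x).prod ∈ L := by
              have h4 := L.add_mem R3
                (L.smul_mem ((χ (d i + d j) ((w.map d).sum) : F)) hW2)
              simpa using h4
            simpa [List.map_cons, List.prod_cons, ← mul_assoc] using hM
  -- the span of 1 and the monomials is everything
  rw [eq_top_iff]
  intro a _
  have ha : a ∈ Algebra.adjoin F (Set.range x) := by rw [hgen]; trivial
  have hTop : a ∈ Submodule.span F
      {b : A | b = 1 ∨ ∃ l : List (Fin n), l ≠ [] ∧ b = (l.map x).prod} := by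
    refine Algebra.adjoin_induction ?_ ?_ ?_ ?_ ha
    · rintro b ⟨i, rfl⟩
      exact Submodule.subset_span (Or.inr ⟨[i], by simp, by simp⟩)
    · intro r
      rw [Algebra.algebraMap_eq_smul_one]
      exact Submodule.smul_mem _ _ (Submodule.subset_span (Or.inl rfl))
    · intro p q _ _ hp hq
      exact Submodule.add_mem _ hp hq
    · intro p q _ _ hp hq
      have hmul := Submodule.mul_mem_mul hp hq
      rw [Submodule.span_mul_span] at hmul
      have hss : {b : A | b = 1 ∨ ∃ l : List (Fin n), l ≠ [] ∧ b = (l.map x).prod}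
          * {b : A | b = 1 ∨ ∃ l : List (Fin n), l ≠ [] ∧ b = (l.map x).prod}
          ⊆ {b : A | b = 1 ∨ ∃ l : List (Fin n), l ≠ [] ∧ b = (l.map x).prod} := by
        rintro b ⟨p', hp', q', hq', rfl⟩
        rcases hp' with rfl | ⟨l1, hl1, rfl⟩
        · rcases hq' with rfl | ⟨l2, hl2, rfl⟩
          · exact Or.inl (one_mul 1)
          · exact Or.inr ⟨l2, hl2, by simp⟩
        · rcases hq' with rfl | ⟨l2, hl2, rfl⟩
          · exact Or.inr ⟨l1, hl1, by simp⟩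
          · exact Or.inr ⟨l1 ++ l2, by simp [hl1], by simp⟩
      exact Submodule.span_le.mpr (hss.trans Submodule.subset_span) hmul
  refine Submodule.span_le.mpr ?_ hTop
  rintro b (rfl | ⟨l, hl, rfl⟩)
  · exact Submodule.mem_sup_right (Submodule.subset_span rfl)
  · exact Submodule.mem_sup_left (key l.length l le_rfl hl)
end

section
/- The algebra A has dimension 4 over F, with basis {1, x_1, x_2, x_2x_1}, and the Lie subalgebra of A (under the commutator bracket [a,b]⁻ := ab − ba) generated by x_1 and x_2 has dimension 2 if q = 1 and dimension 3 if q ≠ 1. -/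
/-- The defining relations `x₁² = 0`, `x₂² = 0`, `x₁x₂ = q·x₂x₁` of the Nichols algebra
of a two-dimensional braided vector space of diagonal type with `q₁₁ = q₂₂ = −1` and
`q₁₂q₂₁ = 1`. -/
inductive NicholsRel (F : Type*) [Field F] (q : Fˣ) :
    FreeAlgebra F (Fin 2) → FreeAlgebra F (Fin 2) → Prop
  | sq1 : NicholsRel F q (FreeAlgebra.ι F 0 * FreeAlgebra.ι F 0) 0
  | sq2 : NicholsRel F q (FreeAlgebra.ι F 1 * FreeAlgebra.ι F 1) 0
  | comm : NicholsRel F q (FreeAlgebra.ι F 0 * FreeAlgebra.ι F 1)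
      ((q : F) • (FreeAlgebra.ι F 1 * FreeAlgebra.ι F 0))

/-- The algebra `A = F⟨x₁,x₂⟩/(x₁², x₂², x₁x₂ − q·x₂x₁)`. -/
abbrev NicholsAlg (F : Type*) [Field F] (q : Fˣ) := RingQuot (NicholsRel F q)

/-- The images `x₁, x₂` of the generators in `A`. -/
noncomputable def NicholsX (F : Type*) [Field F] (q : Fˣ) (i : Fin 2) :
    NicholsAlg F q :=
  RingQuot.mkAlgHom F (NicholsRel F q) (FreeAlgebra.ι F i)

attribute [local instance] LieRing.ofAssociativeRing

/-! The monomials `1, x₁, x₂, x₂x₁` span `A`: their span contains `1` and is closed under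
multiplication by the relations, hence is a subalgebra containing the generators. They are linearly
independent because left multiplication by `x₁, x₂` on the formal span of these monomials satisfies
the relations, giving an algebra map `A → M₄(F)` that sends them to matrices with first columns
`e₀, e₁, e₂, e₃`.

In `A`, `⁅x₁, x₂⁆ = (q - 1) x₂x₁` and `x₂x₁` is annihilated on both sides by `x₁` and `x₂`. So
`x₁, x₂, ⁅x₁, x₂⁆` span a Lie subalgebra (abelian if `q = 1`, Heisenberg if `q ≠ 1`), which is
therefore the one generated by `x₁, x₂`. -/

open Submodule LieSubalgebra in
theorem LieSubalgebra.coe_lieSpan_eq_span_of_forall_lie_mem_span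
    {R L : Type*} [CommRing R] [LieRing L] [LieAlgebra R L] {s : Set L}
    (hs : ∀ᵉ (x ∈ s) (y ∈ s), ⁅x, y⁆ ∈ span R s) :
    (lieSpan R L s : Submodule R L) = span R s := by
  suffices ∀ {x y}, x ∈ span R s → y ∈ span R s → ⁅x, y⁆ ∈ span R s by
    refine le_antisymm ?_ submodule_span_le_lieSpan
    change _ ≤ ({ span R s with lie_mem' := this } : LieSubalgebra R L)
    rw [lieSpan_le]
    exact subset_span
  intro x y hx hy
  induction hx, hy using span_induction₂ with
  | mem_mem x y hx hy => exact hs x hx y hy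
  | zero_left y hy => simp
  | zero_right x hx => simp
  | add_left x y z _ _ _ hx hy => simpa using add_mem hx hy
  | add_right x y z _ _ _ hx hy => simpa using add_mem hx hy
  | smul_left r x y _ _ h => simpa using smul_mem _ r h
  | smul_right r x y _ _ h => simpa using smul_mem _ r h

open Submodule LieSubalgebra in
theorem LieSubalgebra.coe_lieSpan_pair_eq_span
    {R L : Type*} [CommRing R] [LieRing L] [LieAlgebra R L] {x y : L}
    (hx : ⁅x, ⁅x, y⁆⁆ = 0) (hy : ⁅y, ⁅x, y⁆⁆ = 0) :
    (lieSpan R L {x, y} : Submodule R L) = span R {⁅x, y⁆, x, y} := by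
  have hxy : lieSpan R L {x, y} = lieSpan R L {⁅x, y⁆, x, y} := by
    refine le_antisymm (lieSpan_mono (Set.subset_insert _ _)) (lieSpan_le.mpr ?_)
    rintro z (rfl | rfl | rfl)
    · exact lie_mem _ (subset_lieSpan (by simp)) (subset_lieSpan (by simp))
    all_goals exact subset_lieSpan (by simp)
  rw [hxy]
  have hxy_mem : ⁅x, y⁆ ∈ span R {⁅x, y⁆, x, y} := subset_span (by simp)
  refine coe_lieSpan_eq_span_of_forall_lie_mem_span ?_
  have hyx : ⁅y, x⁆ = -⁅x, y⁆ := (lie_skew y x).symm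
  have hxyx : ⁅⁅x, y⁆, x⁆ = 0 := by rw [← lie_skew, hx, neg_zero]
  have hxyy : ⁅⁅x, y⁆, y⁆ = 0 := by rw [← lie_skew, hy, neg_zero]
  rintro a (rfl | rfl | rfl) b (rfl | rfl | rfl) <;>
    simp only [lie_self, hx, hy, hyx, hxyx, hxyy, zero_mem, neg_mem_iff, hxy_mem]

namespace NicholsAlg

variable {F : Type*} [Field F] (q : Fˣ)

local notation "x₁" => NicholsX F q 0
local notation "x₂" => NicholsX F q 1

theorem NicholsX_zero_mul_self : x₁ * x₁ = 0 := by
  simpa [NicholsX] using RingQuot.mkAlgHom_rel F (NicholsRel.sq1 (F := F) (q := q))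

theorem NicholsX_one_mul_self : x₂ * x₂ = 0 := by
  simpa [NicholsX] using RingQuot.mkAlgHom_rel F (NicholsRel.sq2 (F := F) (q := q))

theorem NicholsX_zero_mul_one : x₁ * x₂ = (q : F) • (x₂ * x₁) := by
  simpa [NicholsX] using RingQuot.mkAlgHom_rel F (NicholsRel.comm (F := F) (q := q))

theorem NicholsX_mul_NicholsX_one_mul_zero (i : Fin 2) : NicholsX F q i * (x₂ * x₁) = 0 := by
  match i with
  | 0 =>
    rw [← mul_assoc, NicholsX_zero_mul_one, smul_mul_assoc, mul_assoc,
      NicholsX_zero_mul_self, mul_zero, smul_zero]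
  | 1 => rw [← mul_assoc, NicholsX_one_mul_self, zero_mul]

theorem NicholsX_one_mul_zero_mul_NicholsX (i : Fin 2) : x₂ * x₁ * NicholsX F q i = 0 := by
  match i with
  | 0 => rw [mul_assoc, NicholsX_zero_mul_self, mul_zero]
  | 1 =>
    rw [mul_assoc, NicholsX_zero_mul_one, mul_smul_comm, ← mul_assoc,
      NicholsX_one_mul_self, zero_mul, smul_zero]

theorem lie_NicholsX_zero_one : ⁅x₁, x₂⁆ = ((q : F) - 1) • (x₂ * x₁) := by
  rw [Ring.lie_def, NicholsX_zero_mul_one]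
  module

theorem lie_NicholsX_lie_NicholsX_zero_one (i : Fin 2) : ⁅NicholsX F q i, ⁅x₁, x₂⁆⁆ = 0 := by
  rw [lie_NicholsX_zero_one, Ring.lie_def, mul_smul_comm, smul_mul_assoc,
    NicholsX_mul_NicholsX_one_mul_zero, NicholsX_one_mul_zero_mul_NicholsX, sub_self]

theorem adjoin_range_NicholsX : Algebra.adjoin F (Set.range (NicholsX F q)) = ⊤ := by
  have hrange : Set.range (NicholsX F q) =
      RingQuot.mkAlgHom F (NicholsRel F q) '' Set.range (FreeAlgebra.ι F) := by
    rw [← Set.range_comp]; rfl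
  rw [hrange, ← AlgHom.map_adjoin, FreeAlgebra.adjoin_range_ι, Algebra.map_top,
    AlgHom.range_eq_top]
  exact RingQuot.mkAlgHom_surjective F _

/-- Matrices of left multiplication by `x₁`, `x₂` in the ordered basis `1, x₁, x₂, x₂x₁`. -/
def leftMulMatrix : Fin 2 → Matrix (Fin 4) (Fin 4) F :=
  ![!![0, 0, 0, 0; 1, 0, 0, 0; 0, 0, 0, 0; 0, 0, (q : F), 0],
    !![0, 0, 0, 0; 0, 0, 0, 0; 1, 0, 0, 0; 0, 1, 0, 0]]

theorem leftMulMatrix_mul_self (i : Fin 2) : leftMulMatrix q i * leftMulMatrix q i = 0 := by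
  ext j k
  fin_cases i <;> fin_cases j <;> fin_cases k <;>
    simp [leftMulMatrix, Matrix.mul_apply, Fin.sum_univ_four]

theorem leftMulMatrix_zero_mul_one :
    leftMulMatrix q 0 * leftMulMatrix q 1 = (q : F) • (leftMulMatrix q 1 * leftMulMatrix q 0) := by
  ext j k
  fin_cases j <;> fin_cases k <;> simp [leftMulMatrix, Matrix.mul_apply, Fin.sum_univ_four]

noncomputable def toMatrix : NicholsAlg F q →ₐ[F] Matrix (Fin 4) (Fin 4) F :=
  RingQuot.liftAlgHom F ⟨FreeAlgebra.lift F (leftMulMatrix q), fun _ _ h => by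
    cases h <;> simp [leftMulMatrix_mul_self, leftMulMatrix_zero_mul_one]⟩

@[simp]
theorem toMatrix_NicholsX (i : Fin 2) : toMatrix q (NicholsX F q i) = leftMulMatrix q i := by
  simp [toMatrix, NicholsX]

noncomputable def monomials : Fin 4 → NicholsAlg F q := ![1, x₁, x₂, x₂ * x₁]

theorem linearIndependent_monomials : LinearIndependent F (monomials q) := by
  refine LinearIndependent.of_comp (toMatrix q).toLinearMap ?_
  rw [Fintype.linearIndependent_iff]
  intro g hg i
  have hcol := congrFun (congrFun hg i) 0
  fin_cases i <;> simpa [monomials, Fin.sum_univ_four, leftMulMatrix, Matrix.mul_apply] using hcol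

theorem span_range_monomials : Submodule.span F (Set.range (monomials q)) = ⊤ := by
  set P := Submodule.span F (Set.range (monomials q))
  have hmem (i : Fin 4) : monomials q i ∈ P := Submodule.subset_span ⟨i, rfl⟩
  have hmul : P * P ≤ P := by
    have h0 : 1 ∈ P := hmem 0
    have h1 : x₁ ∈ P := hmem 1
    have h2 : x₂ ∈ P := hmem 2
    have h3 : x₂ * x₁ ∈ P := hmem 3
    rw [Submodule.span_mul_span, Submodule.span_le]
    rintro _ ⟨_, ⟨i, rfl⟩, _, ⟨j, rfl⟩, rfl⟩
    fin_cases i <;> fin_cases j <;>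
      simp [monomials, mul_assoc, NicholsX_zero_mul_self, NicholsX_one_mul_self,
        NicholsX_zero_mul_one, NicholsX_mul_NicholsX_one_mul_zero, h0, h1, h2, h3]
  have hP : Algebra.adjoin F (Set.range (NicholsX F q)) ≤
      P.toSubalgebra (hmem 0) fun _ _ ha hb => hmul (Submodule.mul_mem_mul ha hb) := by
    refine Algebra.adjoin_le ?_
    rintro _ ⟨i, rfl⟩
    fin_cases i
    exacts [hmem 1, hmem 2]
  rw [adjoin_range_NicholsX] at hP
  exact eq_top_iff.2 fun a _ => hP Algebra.mem_top

noncomputable def basis : Module.Basis (Fin 4) F (NicholsAlg F q) :=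
  .mk (linearIndependent_monomials q) (span_range_monomials q).ge

theorem coe_basis : ⇑(basis q) = monomials q := Module.Basis.coe_mk _ _

theorem finrank_span_NicholsX : Module.finrank F (Submodule.span F {x₁, x₂}) = 2 := by
  have h := finrank_span_eq_card ((basis q).linearIndependent.comp ![1, 2] (by decide))
  rw [coe_basis, Set.range_comp, Matrix.range_cons_cons_empty, Set.image_pair] at h
  exact h

theorem finrank_span_insert_NicholsX_one_mul_zero :
    Module.finrank F (Submodule.span F {x₂ * x₁, x₁, x₂}) = 3 := by
  have h := finrank_span_eq_card ((basis q).linearIndependent.comp ![3, 1, 2] (by decide))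
  rw [coe_basis, Set.range_comp, Matrix.range_cons, Matrix.range_cons_cons_empty,
    Set.singleton_union, Set.image_insert_eq, Set.image_pair] at h
  exact h

end NicholsAlg

open Submodule LieSubalgebra NicholsAlg in
theorem stmt_16_general (F : Type*) [Field F] (q : Fˣ) :
    (∃ b : Module.Basis (Fin 4) F (NicholsAlg F q),
        ⇑b = ![1, NicholsX F q 0, NicholsX F q 1,
          NicholsX F q 1 * NicholsX F q 0]) ∧
      Module.finrank F (NicholsAlg F q) = 4 ∧
      ((q : F) = 1 →
        Module.finrank F
          (LieSubalgebra.lieSpan F (NicholsAlg F q)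
            {NicholsX F q 0, NicholsX F q 1}) = 2) ∧
      ((q : F) ≠ 1 →
        Module.finrank F
          (LieSubalgebra.lieSpan F (NicholsAlg F q)
            {NicholsX F q 0, NicholsX F q 1}) = 3) := by
  set K := lieSpan F (NicholsAlg F q) {NicholsX F q 0, NicholsX F q 1}
  have hK : (K : Submodule F (NicholsAlg F q)) =
      span F {((q : F) - 1) • (NicholsX F q 1 * NicholsX F q 0),
        NicholsX F q 0, NicholsX F q 1} := by
    rw [coe_lieSpan_pair_eq_span (lie_NicholsX_lie_NicholsX_zero_one q 0)
      (lie_NicholsX_lie_NicholsX_zero_one q 1), lie_NicholsX_zero_one]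
  refine ⟨⟨basis q, coe_basis q⟩, by simp [Module.finrank_eq_card_basis (basis q)], fun hq => ?_,
    fun hq => ?_⟩
  · change Module.finrank F (K : Submodule F (NicholsAlg F q)) = 2
    rw [hK, hq, sub_self, zero_smul, span_insert_zero, finrank_span_NicholsX]
  · change Module.finrank F (K : Submodule F (NicholsAlg F q)) = 3
    rw [hK, span_insert, span_singleton_smul_eq (sub_ne_zero.2 hq).isUnit, ← span_insert,
      finrank_span_insert_NicholsX_one_mul_zero]

/-- `A` is 4-dimensional with basis `{1, x₁, x₂, x₂x₁}`, and the Lie subalgebra of `A`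
(under the commutator bracket) generated by `x₁, x₂` has dimension `2` if `q = 1` and
dimension `3` if `q ≠ 1`. -/
theorem stmt_16 (F : Type*) [Field F] [CharZero F] (q : Fˣ) :
    (∃ b : Module.Basis (Fin 4) F (NicholsAlg F q),
        ⇑b = ![1, NicholsX F q 0, NicholsX F q 1,
          NicholsX F q 1 * NicholsX F q 0]) ∧
      Module.finrank F (NicholsAlg F q) = 4 ∧
      ((q : F) = 1 →
        Module.finrank F
          (LieSubalgebra.lieSpan F (NicholsAlg F q)
            {NicholsX F q 0, NicholsX F q 1}) = 2) ∧
      ((q : F) ≠ 1 →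
        Module.finrank F
          (LieSubalgebra.lieSpan F (NicholsAlg F q)
            {NicholsX F q 0, NicholsX F q 1}) = 3) :=
  stmt_16_general F q
end
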